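/- arXiv:2006.00891 — 6 statements merged into one kernel-verified Lean document; each statement's English description precedes it below -/
import Mathlib

section
/- If P1 and P2 are square matrices with nonnegative real entries such that P1 + P2 is row-stochastic (each row sums to 1) and the sum P1* = ∑_{n≥0} P1^n converges, then the matrix P1* · P2 is row-stochastic. -/
open Matrix BigOperators

/-- If `P1` and `P2` are square matrices with nonnegative real entries such that `P1 + P2`
is row-stochastic and `∑ P1^n` converges to `Pstar`, then `Pstar * P2` is row-stochastic. -/
theorem stochastic_of_star_mul {Q : Type*} [Fintype Q] [DecidableEq Q]
    (P1 P2 Pstar : Matrix Q Q ℝ)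
    (h1 : ∀ p q, 0 ≤ P1 p q) (h2 : ∀ p q, 0 ≤ P2 p q)
    (hstoch : ∀ p, ∑ q, (P1 + P2) p q = 1)
    (hconv : HasSum (fun n : ℕ => P1 ^ n) Pstar) :
    (∀ p q, 0 ≤ (Pstar * P2) p q) ∧ (∀ p, ∑ q, (Pstar * P2) p q = 1) := by
  -- entrywise sums
  have hentry : ∀ p q, HasSum (fun n : ℕ => (P1 ^ n) p q) (Pstar p q) := by
    intro p q
    have := Pi.hasSum.mp (Pi.hasSum.mp hconv p) q
    exact this
  -- powers are nonnegative entrywise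
  have hpow : ∀ (n : ℕ) p q, 0 ≤ (P1 ^ n) p q := by
    intro n
    induction n with
    | zero => intro p q; simp [Matrix.one_apply]; positivity
    | succ n ih =>
      intro p q
      rw [pow_succ, Matrix.mul_apply]
      exact Finset.sum_nonneg fun r _ => mul_nonneg (ih p r) (h1 r q)
  have hPstar_nonneg : ∀ p q, 0 ≤ Pstar p q :=
    fun p q => hasSum_le (fun n => hpow n p q) hasSum_zero (hentry p q)
  -- Pstar * P1 = Pstar - 1
  have hmul : HasSum (fun n : ℕ => P1 ^ n * P1) (Pstar * P1) := by
    have : Continuous (fun A : Matrix Q Q ℝ => A * P1) :=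
      Continuous.matrix_mul continuous_id continuous_const
    exact (hconv.map (AddMonoidHom.mulRight P1) this)
  have hshift : HasSum (fun n : ℕ => P1 ^ (n + 1)) (Pstar - 1) := by
    rw [hasSum_nat_add_iff 1]
    simpa using hconv
  have key : Pstar * P1 = Pstar - 1 := by
    have : (fun n : ℕ => P1 ^ n * P1) = fun n : ℕ => P1 ^ (n + 1) := by
      funext n; rw [pow_succ]
    rw [this] at hmul
    exact hmul.unique hshift
  constructor
  · intro p q
    rw [Matrix.mul_apply]
    exact Finset.sum_nonneg fun r _ => mul_nonneg (hPstar_nonneg p r) (h2 r q)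
  · intro p
    have h12 : ∑ q, (Pstar * P2) p q
        = ∑ q, (Pstar * (P1 + P2)) p q - ∑ q, (Pstar * P1) p q := by
      rw [Matrix.mul_add]
      simp [Matrix.add_apply, Finset.sum_add_distrib]
    rw [h12, key]
    have hA : ∑ q, (Pstar * (P1 + P2)) p q = ∑ r, Pstar p r := by
      simp only [Matrix.mul_apply]
      rw [Finset.sum_comm]
      refine Finset.sum_congr rfl fun r _ => ?_
      rw [← Finset.mul_sum, hstoch r, mul_one]
    have hB : ∑ q, (Pstar - 1) p q = (∑ r, Pstar p r) - 1 := by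
      simp [Matrix.sub_apply, Finset.sum_sub_distrib, Matrix.one_apply]
    rw [hA, hB]
    ring
end

section
/- If P1 and P2 are square matrices with nonnegative real entries such that P1 + P2 is row-stochastic, π is a row vector with π(P1+P2) = π, and P1* = ∑_{n≥0} P1^n converges, then the row vector π - π·P1 is a left fixed vector of P1*·P2, i.e., (π - π·P1)·(P1*·P2) = π - π·P1. -/
open Matrix BigOperators

/-- If `P1 + P2` is row-stochastic, `π (P1+P2) = π` and `∑ P1^n = Pstar` converges,
then `π - π P1` is a left fixed vector of `Pstar * P2`. -/
theorem left_fixed_vector_of_star_mul {Q : Type*} [Fintype Q] [DecidableEq Q]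
    (P1 P2 Pstar : Matrix Q Q ℝ)
    (h1 : ∀ p q, 0 ≤ P1 p q) (h2 : ∀ p q, 0 ≤ P2 p q)
    (hstoch : ∀ p, ∑ q, (P1 + P2) p q = 1)
    (π : Q → ℝ) (hπ : π ᵥ* (P1 + P2) = π)
    (hconv : HasSum (fun n : ℕ => P1 ^ n) Pstar) :
    (π - π ᵥ* P1) ᵥ* (Pstar * P2) = π - π ᵥ* P1 := by
  have hshift : HasSum (fun n : ℕ => P1 ^ (n + 1))
      (Pstar - ∑ i ∈ Finset.range 1, P1 ^ i) :=
    (hasSum_nat_add_iff' 1).mpr hconv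
  have hmul : HasSum (fun n : ℕ => P1 * P1 ^ n) (P1 * Pstar) := hconv.mul_left P1
  have hkey : P1 * Pstar = Pstar - 1 := by
    have := hmul.unique (by simpa [pow_succ'] using hshift)
    simpa using this
  have hstar : (π - π ᵥ* P1) ᵥ* Pstar = π := by
    rw [sub_vecMul, vecMul_vecMul, hkey, vecMul_sub]
    simp
  have hP2 : π ᵥ* P2 = π - π ᵥ* P1 := by
    have := hπ
    rw [vecMul_add] at this
    linear_combination (norm := module) this
  rw [← vecMul_vecMul, hstar, hP2]
end

section
/- Let M be the normalized adjacency matrix of an unambiguous automaton, and suppose there is a constant K with (M^n)_{p,q} ≤ K·λ^n for all n and states p,q, where λ < 1. Then for all sufficiently large n there exists a word of length n over A that does not label any run in the automaton; consequently the automaton accepts no normal sequence. -/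
open Matrix BigOperators Filter

/-- A run of length `n` from `p` to `q` labeled by the word `w`. -/
def IsRun {Q A : Type*} (Δ : Q → A → Q → Prop) {n : ℕ} (w : Fin n → A)
    (p q : Q) (s : Fin (n + 1) → Q) : Prop :=
  s 0 = p ∧ s (Fin.last n) = q ∧ ∀ i : Fin n, Δ (s i.castSucc) (w i) (s i.succ)

/-- Number of occurrences of the word `w` starting in the first `n` positions of `x`. -/
def occCount {A : Type*} [DecidableEq A] (x : ℕ → A) (w : List A) (n : ℕ) : ℕ :=
  ((Finset.range n).filter (fun i => ∀ j : Fin w.length, x (i + j) = w.get j)).card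

/-- A sequence is normal if every nonempty finite word occurs with limiting
frequency `(#A)^{-|w|}`. -/
def IsNormal {A : Type*} [Fintype A] [DecidableEq A] (x : ℕ → A) : Prop :=
  ∀ w : List A, w ≠ [] →
    Filter.Tendsto (fun n => (occCount x w n : ℝ) / n) Filter.atTop
      (nhds (1 / (Fintype.card A : ℝ) ^ w.length))

/-!
Counting pairs (word, run) of length `n` by extending runs one letter at a time shows that
there are at most `#A ^ n * ∑ p q, (M ^ n) p q` of them. When this is less than `#A ^ n`, which
happens for large `n` since `(M ^ n) p q ≤ K λ ^ n` with `λ < 1`, some word of length `n`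
labels no run. A normal sequence contains every word as a factor, so it cannot label an
infinite run.
-/

open Finset

section Runs

variable {Q A : Type*} (Δ : Q → A → Q → Prop)

theorem isRun_of_forall_step {x : ℕ → A} {s : ℕ → Q} (hs : ∀ i, Δ (s i) (x i) (s (i + 1)))
    (i n : ℕ) : IsRun Δ (fun j : Fin n => x (i + j)) (s i) (s (i + n)) (fun j => s (i + j)) :=
  ⟨by simp, by simp, fun j => by simpa [add_assoc] using hs (i + j)⟩

variable [Fintype Q] [DecidableEq Q] [Fintype A] [∀ p a q, Decidable (Δ p a q)]

instance {n : ℕ} (w : Fin n → A) (p q : Q) (s : Fin (n + 1) → Q) :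
    Decidable (IsRun Δ w p q s) := by
  unfold IsRun; infer_instance

def runPairs (n : ℕ) (p q : Q) : Finset ((Fin n → A) × (Fin (n + 1) → Q)) :=
  {ws | IsRun Δ ws.1 p q ws.2}

def letterCount : Matrix Q Q ℕ :=
  Matrix.of fun p q => #{a | Δ p a q}

theorem card_runPairs_zero_le (p q : Q) : #(runPairs Δ 0 p q) ≤ (1 : Matrix Q Q ℕ) p q := by
  have hrun : ∀ ws ∈ runPairs Δ 0 p q, p = q ∧ ws = (Fin.elim0, fun _ => p) := by
    rintro ⟨w, s⟩ hws
    obtain ⟨hs0, hslast, -⟩ := (mem_filter.mp hws).2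
    refine ⟨hs0.symm.trans hslast, Prod.ext (Subsingleton.elim _ _) (funext fun i => ?_)⟩
    rw [Fin.fin_one_eq_zero i, hs0]
  rw [Matrix.one_apply]
  split_ifs with hpq
  · exact card_le_one.mpr fun a ha b hb => (hrun a ha).2.trans (hrun b hb).2.symm
  · rw [Nat.le_zero, card_eq_zero]
    exact eq_empty_of_forall_notMem fun ws hws => hpq (hrun ws hws).1

theorem card_runPairs_succ_le (n : ℕ) (p q : Q) :
    #(runPairs Δ (n + 1) p q) ≤ ∑ r, #(runPairs Δ n p r) * letterCount Δ r q := by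
  let unsnoc : (Fin (n + 1) → A) × (Fin (n + 2) → Q) →
      Σ _ : Q, ((Fin n → A) × (Fin (n + 1) → Q)) × A :=
    fun ws => ⟨ws.2 (Fin.last n).castSucc, (Fin.init ws.1, Fin.init ws.2), ws.1 (Fin.last n)⟩
  calc #(runPairs Δ (n + 1) p q)
      ≤ #(univ.sigma fun r => runPairs Δ n p r ×ˢ ({a | Δ r a q} : Finset A)) := by
        refine card_le_card_of_injOn unsnoc ?_ ?_
        · rintro ⟨w, s⟩ hws
          obtain ⟨hs0, hslast, hstep⟩ := (mem_filter.mp hws).2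
          simp only [coe_sigma, Set.mem_sigma_iff, coe_univ, Set.mem_univ, coe_product,
            Set.mem_prod, mem_coe, runPairs, mem_filter, mem_univ, true_and, unsnoc]
          refine ⟨⟨hs0, rfl, fun i => ?_⟩, ?_⟩
          · simpa only [Fin.init, Fin.succ_castSucc] using hstep i.castSucc
          · have hlast := hstep (Fin.last n)
            rwa [Fin.succ_last, hslast] at hlast
        · rintro ⟨w, s⟩ hws ⟨w', s'⟩ hws' heq
          have hslast : s (Fin.last (n + 1)) = q := (mem_filter.mp hws).2.2.1
          have hslast' : s' (Fin.last (n + 1)) = q := (mem_filter.mp hws').2.2.1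
          simp only [unsnoc, Sigma.mk.injEq, heq_eq_eq, Prod.mk.injEq] at heq
          obtain ⟨-, ⟨hw, hs⟩, hlast⟩ := heq
          rw [Prod.mk.injEq, ← Fin.snoc_init_self w, ← Fin.snoc_init_self w', hw, hlast,
            ← Fin.snoc_init_self s, ← Fin.snoc_init_self s', hs, hslast, hslast']
          exact ⟨rfl, rfl⟩
    _ = ∑ r, #(runPairs Δ n p r) * letterCount Δ r q := by
        simp only [card_sigma, card_product, letterCount, Matrix.of_apply]

theorem card_runPairs_le_letterCount_pow (n : ℕ) (p q : Q) :
    #(runPairs Δ n p q) ≤ (letterCount Δ ^ n) p q := by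
  induction n generalizing q with
  | zero => exact card_runPairs_zero_le Δ p q
  | succ n ih =>
    rw [pow_succ, Matrix.mul_apply]
    exact (card_runPairs_succ_le Δ n p q).trans
      (sum_le_sum fun r _ => Nat.mul_le_mul_right _ (ih r))

theorem card_pow_le_sum_card_runPairs {n : ℕ}
    (hrun : ∀ w : Fin n → A, ∃ p q s, IsRun Δ w p q s) :
    Fintype.card A ^ n ≤ ∑ p, ∑ q, #(runPairs Δ n p q) := by
  classical
  have hcover : (univ : Finset (Fin n → A)) ⊆
      univ.biUnion fun p => univ.biUnion fun q => (runPairs Δ n p q).image Prod.fst := by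
    intro w _
    obtain ⟨p, q, s, hs⟩ := hrun w
    simp only [mem_biUnion, mem_univ, mem_image, true_and]
    exact ⟨p, q, (w, s), by simpa [runPairs] using hs, rfl⟩
  calc Fintype.card A ^ n = #(univ : Finset (Fin n → A)) := by simp
    _ ≤ _ := card_le_card hcover
    _ ≤ ∑ p, #(univ.biUnion fun q => (runPairs Δ n p q).image Prod.fst) := card_biUnion_le
    _ ≤ ∑ p, ∑ q, #((runPairs Δ n p q).image Prod.fst) :=
        sum_le_sum fun _ _ => card_biUnion_le
    _ ≤ ∑ p, ∑ q, #(runPairs Δ n p q) :=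
        sum_le_sum fun _ _ => sum_le_sum fun _ _ => card_image_le

variable [Nonempty A]

theorem letterCount_pow_apply_eq {M : Matrix Q Q ℝ}
    (hM : ∀ p q, M p q = (#{a | Δ p a q} : ℝ) / Fintype.card A) (n : ℕ) (p q : Q) :
    ((letterCount Δ ^ n) p q : ℝ) = (Fintype.card A : ℝ) ^ n * (M ^ n) p q := by
  have hA : (Fintype.card A : ℝ) ≠ 0 := by positivity
  have hM' : M = (Fintype.card A : ℝ)⁻¹ • (letterCount Δ).map (Nat.castRingHom ℝ) := by
    ext p q
    rw [hM, Matrix.smul_apply, map_apply, smul_eq_mul, inv_mul_eq_div]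
    rfl
  rw [hM', smul_pow, ← Matrix.map_pow, Matrix.smul_apply, map_apply, smul_eq_mul, inv_pow,
    mul_inv_cancel_left₀ (pow_ne_zero n hA)]
  rfl

theorem exists_word_not_isRun_of_sum_lt_one {M : Matrix Q Q ℝ}
    (hM : ∀ p q, M p q = (#{a | Δ p a q} : ℝ) / Fintype.card A) {n : ℕ}
    (hsum : ∑ p, ∑ q, (M ^ n) p q < 1) :
    ∃ w : Fin n → A, ∀ p q s, ¬ IsRun Δ w p q s := by
  by_contra! hrun
  have hA : (0 : ℝ) < (Fintype.card A : ℝ) ^ n := by positivity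
  have hcount : (Fintype.card A : ℝ) ^ n ≤ (Fintype.card A : ℝ) ^ n * ∑ p, ∑ q, (M ^ n) p q :=
    calc (Fintype.card A : ℝ) ^ n
        ≤ ∑ p, ∑ q, (#(runPairs Δ n p q) : ℝ) := by
          exact_mod_cast card_pow_le_sum_card_runPairs Δ hrun
      _ ≤ ∑ p, ∑ q, ((letterCount Δ ^ n) p q : ℝ) := by
          gcongr
          exact_mod_cast card_runPairs_le_letterCount_pow Δ n _ _
      _ = _ := by simp only [letterCount_pow_apply_eq Δ hM, mul_sum]
  linarith [(mul_lt_iff_lt_one_right hA).mpr hsum]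

end Runs

theorem IsNormal.exists_occurrence {A : Type*} [Fintype A] [DecidableEq A] {x : ℕ → A}
    (hx : IsNormal x) {n : ℕ} (hn : 0 < n) (w : Fin n → A) :
    ∃ i, (fun j : Fin n => x (i + j)) = w := by
  have : Nonempty A := ⟨w ⟨0, hn⟩⟩
  have hfreq := hx (List.ofFn w) (by simpa using hn.ne')
  obtain ⟨k, hk⟩ := (hfreq.eventually_const_lt (by positivity)).exists
  have hocc : occCount x (List.ofFn w) k ≠ 0 := by
    rintro h
    simp [h] at hk
  obtain ⟨i, hi⟩ := card_ne_zero.mp hocc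
  refine ⟨i, funext fun j => ?_⟩
  simpa using (mem_filter.mp hi).2 ⟨j, by simp⟩

theorem no_normal_accepted_of_small_spectral_radius_general {Q A : Type*}
    [Fintype Q] [DecidableEq Q] [Fintype A] [DecidableEq A] [Nonempty A]
    (Δ : Q → A → Q → Prop) [∀ p a q, Decidable (Δ p a q)]
    (I F : Set Q)
    (M : Matrix Q Q ℝ)
    (hM : ∀ p q, M p q =
      ((Finset.univ.filter (fun a : A => Δ p a q)).card : ℝ) / Fintype.card A)
    (K lam : ℝ) (hlam0 : 0 ≤ lam) (hlam : lam < 1)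
    (hK : ∀ (n : ℕ) (p q : Q), (M ^ n) p q ≤ K * lam ^ n) :
    (∀ᶠ n in atTop, ∃ w : Fin n → A, ∀ (p q : Q) (s : Fin (n + 1) → Q), ¬ IsRun Δ w p q s) ∧
    ∀ x : ℕ → A, IsNormal x →
      ¬ ∃ s : ℕ → Q, s 0 ∈ I ∧ (∀ i, Δ (s i) (x i) (s (i + 1))) ∧
        ∀ m, ∃ k, m ≤ k ∧ s k ∈ F := by
  have hsum : Tendsto (fun n => Fintype.card Q * Fintype.card Q * K * lam ^ n) atTop (nhds 0) := by
    simpa using (tendsto_pow_atTop_nhds_zero_of_lt_one hlam0 hlam).const_mul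
      (Fintype.card Q * Fintype.card Q * K : ℝ)
  have hword : ∀ᶠ n in atTop, ∃ w : Fin n → A, ∀ p q s, ¬ IsRun Δ w p q s := by
    filter_upwards [hsum.eventually_lt_const one_pos] with n hn
    refine exists_word_not_isRun_of_sum_lt_one Δ hM (lt_of_le_of_lt ?_ hn)
    calc ∑ p, ∑ q, (M ^ n) p q ≤ ∑ _p : Q, ∑ _q : Q, K * lam ^ n := by gcongr; exact hK n _ _
      _ = _ := by simp [mul_assoc]
  refine ⟨hword, ?_⟩
  rintro x hx ⟨s, -, hs, -⟩
  obtain ⟨n, ⟨w, hw⟩, hn⟩ := (hword.and (eventually_gt_atTop 0)).exists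
  obtain ⟨i, rfl⟩ := hx.exists_occurrence hn w
  exact hw _ _ _ (isRun_of_forall_step Δ hs i n)

/-- If the entries of `M^n` are bounded by `K·λ^n` with `λ < 1`, then for all sufficiently
large `n` some word of length `n` labels no run; consequently the automaton accepts no
normal sequence. -/
theorem no_normal_accepted_of_small_spectral_radius {Q A : Type*}
    [Fintype Q] [DecidableEq Q] [Fintype A] [DecidableEq A] [Nonempty A]
    (Δ : Q → A → Q → Prop) [∀ p a q, Decidable (Δ p a q)]
    (I F : Set Q)
    (hunamb : ∀ (n : ℕ) (w : Fin n → A) (p q : Q) (s s' : Fin (n + 1) → Q),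
      IsRun Δ w p q s → IsRun Δ w p q s' → s = s')
    (M : Matrix Q Q ℝ)
    (hM : ∀ p q, M p q =
      ((Finset.univ.filter (fun a : A => Δ p a q)).card : ℝ) / Fintype.card A)
    (K lam : ℝ) (hlam0 : 0 ≤ lam) (hlam : lam < 1)
    (hK : ∀ (n : ℕ) (p q : Q), (M ^ n) p q ≤ K * lam ^ n) :
    (∀ᶠ n in atTop, ∃ w : Fin n → A, ∀ (p q : Q) (s : Fin (n + 1) → Q), ¬ IsRun Δ w p q s) ∧
    ∀ x : ℕ → A, IsNormal x →
      ¬ ∃ s : ℕ → Q, s 0 ∈ I ∧ (∀ i, Δ (s i) (x i) (s (i + 1))) ∧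
        ∀ m, ∃ k, m ≤ k ∧ s k ∈ F :=
  no_normal_accepted_of_small_spectral_radius_general Δ I F M hM K lam hlam0 hlam hK
end

section
/- Let A be a finite alphabet with uniform (Bernoulli) measure μ on A^ℕ. Let F : Q → Set(A^ℕ) assign to each state q of an unambiguous automaton the set F_q of sequences labeling a final run from q, and let α_q = μ(F_q). Then for every state p, F_p is the disjoint union over transitions p →a q of the sets a·F_q, and consequently α_p = (1/#A) · ∑_{(a,q) : p →a q} α_q; that is, M·α = α for the normalized adjacency matrix M. -/
open Matrix BigOperators MeasureTheory
open scoped ENNReal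

/-- Prepend a symbol to a sequence. -/
def consSeq {A : Type*} (a : A) (y : ℕ → A) : ℕ → A := fun n => Nat.casesOn n a y

/-- `s` is a final run from `q` labeled `x`: it starts at `q`, follows transitions
of `Δ`, and visits the final set `Fst` infinitely often. -/
def IsFinalRun {Q A : Type*} (Δ : Q → A → Q → Prop) (Fst : Set Q)
    (q : Q) (x : ℕ → A) (s : ℕ → Q) : Prop :=
  s 0 = q ∧ (∀ i, Δ (s i) (x i) (s (i + 1))) ∧ ∀ m, ∃ k, m ≤ k ∧ s k ∈ Fst

/-!
Splitting a final run from `p` into its first transition `p →a q` and a final run from `q`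
decomposes `F_p` as the union of the sets `a·F_q`. Unambiguity makes this union disjoint: a
common label of `a·F_q` and `a'·F_{q'}` would give two final runs from `p`, which must agree,
forcing `a = a'` and `q = q'`. It also makes `F_q` measurable, as the injective projection of
the Borel set of (label, run) pairs (Lusin–Souslin). Additivity of `μ` together with
`μ(a·S) = μ(S)/#A` then gives `α_p = (1/#A) ∑ α_q`, which regrouped by target state is
`M α = α`.
-/

section Sequences

variable {A : Type*}

lemma consSeq_injective (a : A) : Function.Injective (consSeq a) :=
  fun _ _ h => funext fun n => congrFun h (n + 1)

lemma consSeq_head_tail (x : ℕ → A) : consSeq (x 0) (fun n => x (n + 1)) = x := by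
  funext n; cases n <;> rfl

lemma measurable_consSeq [MeasurableSpace A] (a : A) : Measurable (consSeq a) := by
  rw [measurable_pi_iff]
  rintro (_ | n)
  · exact measurable_const
  · exact measurable_pi_apply n

end Sequences

section Runs

variable {Q A : Type*} {Δ : Q → A → Q → Prop} {Fst : Set Q}

/-- The set `F_q` of labels of final runs from `q`. -/
def finalLabels (Δ : Q → A → Q → Prop) (Fst : Set Q) (q : Q) : Set (ℕ → A) :=
  {x | ∃ s, IsFinalRun Δ Fst q x s}

def IsUnambiguous (Δ : Q → A → Q → Prop) (Fst : Set Q) : Prop :=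
  ∀ (q : Q) (x : ℕ → A) (s s' : ℕ → Q),
    IsFinalRun Δ Fst q x s → IsFinalRun Δ Fst q x s' → s = s'

lemma IsFinalRun.cons {p q : Q} {a : A} {y : ℕ → A} {s : ℕ → Q} (hΔ : Δ p a q)
    (h : IsFinalRun Δ Fst q y s) : IsFinalRun Δ Fst p (consSeq a y) (consSeq p s) := by
  obtain ⟨rfl, hstep, hinf⟩ := h
  refine ⟨rfl, ?_, fun m => ?_⟩
  · rintro (_ | i)
    · exact hΔ
    · exact hstep i
  · obtain ⟨k, hk, hkF⟩ := hinf m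
    exact ⟨k + 1, by omega, hkF⟩

lemma IsFinalRun.tail {p : Q} {x : ℕ → A} {s : ℕ → Q} (h : IsFinalRun Δ Fst p x s) :
    IsFinalRun Δ Fst (s 1) (fun n => x (n + 1)) (fun n => s (n + 1)) := by
  obtain ⟨-, hstep, hinf⟩ := h
  refine ⟨rfl, fun i => hstep (i + 1), fun m => ?_⟩
  obtain ⟨k, hk, hkF⟩ := hinf (m + 1)
  obtain ⟨j, rfl⟩ : ∃ j, k = j + 1 := ⟨k - 1, by omega⟩
  exact ⟨j, by omega, hkF⟩

lemma finalLabels_eq_iUnion (p : Q) :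
    finalLabels Δ Fst p =
      ⋃ (aq : A × Q) (_ : Δ p aq.1 aq.2), consSeq aq.1 '' finalLabels Δ Fst aq.2 := by
  ext x
  simp only [finalLabels, Set.mem_iUnion, Set.mem_image, Set.mem_ofPred_eq]
  constructor
  · rintro ⟨s, hs⟩
    have hfirst : Δ p (x 0) (s 1) := hs.1 ▸ hs.2.1 0
    exact ⟨(x 0, s 1), hfirst, _, ⟨_, hs.tail⟩, consSeq_head_tail x⟩
  · rintro ⟨⟨a, q⟩, hΔ, y, ⟨s, hs⟩, rfl⟩
    exact ⟨_, hs.cons hΔ⟩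

lemma disjoint_image_consSeq_finalLabels (hunamb : IsUnambiguous Δ Fst) {p : Q}
    {aq aq' : A × Q} (hne : aq ≠ aq') (h : Δ p aq.1 aq.2) (h' : Δ p aq'.1 aq'.2) :
    Disjoint (consSeq aq.1 '' finalLabels Δ Fst aq.2)
      (consSeq aq'.1 '' finalLabels Δ Fst aq'.2) := by
  obtain ⟨a, q⟩ := aq
  obtain ⟨a', q'⟩ := aq'
  refine Set.disjoint_left.2 ?_
  rintro _ ⟨y, ⟨s, hs⟩, rfl⟩ ⟨y', ⟨s', hs'⟩, hx⟩
  obtain rfl : a' = a := congrFun hx 0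
  obtain rfl : y' = y := consSeq_injective a' hx
  have hruns := hunamb p _ _ _ (hs'.cons h') (hs.cons h)
  have hq : q' = q := hs'.1.symm.trans ((congrFun hruns 1).trans hs.1)
  exact hne (by rw [hq])

lemma measurableSet_finalLabels [Countable Q] [Countable A] [MeasurableSpace A]
    [MeasurableSingletonClass A] (hunamb : IsUnambiguous Δ Fst) (q : Q) :
    MeasurableSet (finalLabels Δ Fst q) := by
  let _ : MeasurableSpace Q := ⊤
  have _ : DiscreteMeasurableSpace Q := ⟨fun _ => trivial⟩
  let runs : Set ((ℕ → A) × (ℕ → Q)) := {xs | IsFinalRun Δ Fst q xs.1 xs.2}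
  have hruns : MeasurableSet runs := by
    have hstart : Measurable fun xs : (ℕ → A) × (ℕ → Q) => xs.2 0 = q :=
      measurableSet_setOfPred.1 <| (measurableSet_singleton q).preimage (by fun_prop)
    have hstep : ∀ i, Measurable fun xs : (ℕ → A) × (ℕ → Q) =>
        Δ (xs.2 i) (xs.1 i) (xs.2 (i + 1)) := fun i =>
      measurableSet_setOfPred.1 <|
        (Set.to_countable {t : Q × A × Q | Δ t.1 t.2.1 t.2.2}).measurableSet.preimage
          (f := fun xs : (ℕ → A) × (ℕ → Q) => (xs.2 i, xs.1 i, xs.2 (i + 1))) (by fun_prop)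
    have hvisit : ∀ k, Measurable fun xs : (ℕ → A) × (ℕ → Q) => xs.2 k ∈ Fst := fun k =>
      measurableSet_setOfPred.1 <| (MeasurableSet.of_discrete (s := Fst)).preimage
        (f := fun xs : (ℕ → A) × (ℕ → Q) => xs.2 k) (by fun_prop)
    exact measurableSet_setOfPred.2 <| hstart.and <| (Measurable.forall hstep).and <|
      Measurable.forall fun m => Measurable.exists fun k => measurable_const.and (hvisit k)
  have hproj : finalLabels Δ Fst q = Prod.fst '' runs := by
    ext x
    simp [finalLabels, runs]
  rw [hproj]
  refine hruns.image_of_measurable_injOn measurable_fst ?_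
  rintro ⟨x, s⟩ hs ⟨x', s'⟩ hs' (rfl : x = x')
  exact Prod.ext rfl (hunamb q x s s' hs hs')

end Runs

section Measure

variable {Q A : Type*} [Fintype Q] [Fintype A] [MeasurableSpace A] [MeasurableSingletonClass A]
  {Δ : Q → A → Q → Prop} [∀ p a q, Decidable (Δ p a q)] {Fst : Set Q} {μ : Measure (ℕ → A)}

lemma measure_finalLabels_eq_sum
    (hμ : ∀ (a : A) (S : Set (ℕ → A)), μ (consSeq a '' S) = μ S / (Fintype.card A : ℝ≥0∞))
    (hunamb : IsUnambiguous Δ Fst) (p : Q) :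
    μ (finalLabels Δ Fst p) = ∑ aq : A × Q,
      if Δ p aq.1 aq.2 then μ (finalLabels Δ Fst aq.2) / (Fintype.card A : ℝ≥0∞) else 0 := by
  have hunion : finalLabels Δ Fst p =
      ⋃ aq ∈ Finset.univ.filter (fun aq : A × Q => Δ p aq.1 aq.2),
        consSeq aq.1 '' finalLabels Δ Fst aq.2 := by
    simp [finalLabels_eq_iUnion p]
  rw [hunion, measure_biUnion_finset, Finset.sum_filter]
  · exact Finset.sum_congr rfl fun aq _ => by split_ifs <;> simp [hμ]
  · intro aq haq aq' haq' hne
    exact disjoint_image_consSeq_finalLabels hunamb hne (Finset.mem_filter.1 haq).2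
      (Finset.mem_filter.1 haq').2
  · exact fun aq _ => (measurableSet_finalLabels hunamb aq.2).image_of_measurable_injOn
      (measurable_consSeq aq.1) (consSeq_injective aq.1).injOn

lemma toReal_measure_finalLabels_eq_sum [Nonempty A] [IsFiniteMeasure μ]
    (hμ : ∀ (a : A) (S : Set (ℕ → A)), μ (consSeq a '' S) = μ S / (Fintype.card A : ℝ≥0∞))
    (hunamb : IsUnambiguous Δ Fst) (p : Q) :
    (μ (finalLabels Δ Fst p)).toReal = (1 / (Fintype.card A : ℝ)) * ∑ aq : A × Q,
      if Δ p aq.1 aq.2 then (μ (finalLabels Δ Fst aq.2)).toReal else 0 := by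
  rw [measure_finalLabels_eq_sum hμ hunamb p, ENNReal.toReal_sum, Finset.mul_sum]
  · refine Finset.sum_congr rfl fun aq _ => ?_
    split_ifs <;> simp [ENNReal.toReal_div, div_eq_inv_mul]
  · intro aq _
    split_ifs
    · exact ENNReal.div_ne_top (measure_ne_top μ _) (by simp)
    · exact ENNReal.zero_ne_top

end Measure

lemma sum_ite_eq_sum_card_filter_mul {Q A R : Type*} [Fintype Q] [Fintype A] [Semiring R]
    (Δ : Q → A → Q → Prop) [∀ p a q, Decidable (Δ p a q)] (p : Q) (v : Q → R) :
    ∑ aq : A × Q, (if Δ p aq.1 aq.2 then v aq.2 else 0) =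
      ∑ q, ((Finset.univ.filter (fun a : A => Δ p a q)).card : R) * v q := by
  rw [Fintype.sum_prod_type, Finset.sum_comm]
  refine Finset.sum_congr rfl fun q _ => ?_
  simp only [Finset.sum_ite, Finset.sum_const, nsmul_eq_mul, mul_zero, add_zero]

theorem future_decomposition_general {Q A : Type*} [Fintype Q]
    [Fintype A] [Nonempty A] [MeasurableSpace A] [MeasurableSingletonClass A]
    (Δ : Q → A → Q → Prop) [∀ p a q, Decidable (Δ p a q)] (Fst : Set Q)
    (μ : Measure (ℕ → A)) [IsProbabilityMeasure μ]
    (hμ : ∀ (a : A) (S : Set (ℕ → A)), μ (consSeq a '' S) = μ S / (Fintype.card A : ℝ≥0∞))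
    (hunamb : ∀ (q : Q) (x : ℕ → A) (s s' : ℕ → Q),
      IsFinalRun Δ Fst q x s → IsFinalRun Δ Fst q x s' → s = s')
    (F : Q → Set (ℕ → A))
    (hF : ∀ q, F q = {x | ∃ s : ℕ → Q, IsFinalRun Δ Fst q x s})
    (α : Q → ℝ) (hα : ∀ q, α q = (μ (F q)).toReal)
    (M : Matrix Q Q ℝ)
    (hM : ∀ p q, M p q =
      ((Finset.univ.filter (fun a : A => Δ p a q)).card : ℝ) / Fintype.card A) :
    (∀ p, F p = ⋃ (aq : A × Q) (_ : Δ p aq.1 aq.2), consSeq aq.1 '' F aq.2) ∧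
    (∀ (p : Q) (aq aq' : A × Q), aq ≠ aq' → Δ p aq.1 aq.2 → Δ p aq'.1 aq'.2 →
      Disjoint (consSeq aq.1 '' F aq.2) (consSeq aq'.1 '' F aq'.2)) ∧
    (∀ p, α p = (1 / (Fintype.card A : ℝ)) *
      ∑ aq : A × Q, if Δ p aq.1 aq.2 then α aq.2 else 0) ∧
    M *ᵥ α = α := by
  obtain rfl : F = finalLabels Δ Fst := funext hF
  have hbalance : ∀ p, α p = (1 / (Fintype.card A : ℝ)) *
      ∑ aq : A × Q, if Δ p aq.1 aq.2 then α aq.2 else 0 := by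
    simpa only [hα] using toReal_measure_finalLabels_eq_sum hμ hunamb
  refine ⟨finalLabels_eq_iUnion, fun p _ _ hne h h' =>
    disjoint_image_consSeq_finalLabels hunamb hne h h', hbalance, funext fun p => ?_⟩
  rw [hbalance p, sum_ite_eq_sum_card_filter_mul, Finset.mul_sum]
  simp only [mulVec, dotProduct, hM]
  exact Finset.sum_congr rfl fun q _ => by ring

/-- For an unambiguous Büchi automaton with `F_q` the set of labels of final runs
from `q` and `α_q = μ(F_q)` (uniform Bernoulli measure), `F_p` is the disjoint union
over transitions `p →a q` of the sets `a·F_q`, and `M·α = α` for the normalized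
adjacency matrix `M`. -/
theorem future_decomposition {Q A : Type*} [Fintype Q] [DecidableEq Q]
    [Fintype A] [Nonempty A] [MeasurableSpace A] [MeasurableSingletonClass A]
    (Δ : Q → A → Q → Prop) [∀ p a q, Decidable (Δ p a q)] (Fst : Set Q)
    (μ : Measure (ℕ → A)) [IsProbabilityMeasure μ]
    (hμ : ∀ (a : A) (S : Set (ℕ → A)), μ (consSeq a '' S) = μ S / (Fintype.card A : ℝ≥0∞))
    (hunamb : ∀ (q : Q) (x : ℕ → A) (s s' : ℕ → Q),
      IsFinalRun Δ Fst q x s → IsFinalRun Δ Fst q x s' → s = s')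
    (F : Q → Set (ℕ → A))
    (hF : ∀ q, F q = {x | ∃ s : ℕ → Q, IsFinalRun Δ Fst q x s})
    (α : Q → ℝ) (hα : ∀ q, α q = (μ (F q)).toReal)
    (M : Matrix Q Q ℝ)
    (hM : ∀ p q, M p q =
      ((Finset.univ.filter (fun a : A => Δ p a q)).card : ℝ) / Fintype.card A) :
    (∀ p, F p = ⋃ (aq : A × Q) (_ : Δ p aq.1 aq.2), consSeq aq.1 '' F aq.2) ∧
    (∀ (p : Q) (aq aq' : A × Q), aq ≠ aq' → Δ p aq.1 aq.2 → Δ p aq'.1 aq'.2 →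
      Disjoint (consSeq aq.1 '' F aq.2) (consSeq aq'.1 '' F aq'.2)) ∧
    (∀ p, α p = (1 / (Fintype.card A : ℝ)) *
      ∑ aq : A × Q, if Δ p aq.1 aq.2 then α aq.2 else 0) ∧
    M *ᵥ α = α :=
  future_decomposition_general Δ Fst μ hμ hunamb F hF α hα M hM
end

section
/- Under the same hypotheses (strongly connected unambiguous automaton with spectral radius 1, accepting run ρ labeled by a normal sequence), for every finite run γ = q_0 →a1 q_1 ⋯ →an q_n of length n, the limiting frequency of γ as a factor of ρ exists and equals π_{q_0} α_{q_n} / (#A)^n. -/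
open Matrix BigOperators Filter

/-- `s` is an accepting run labeled `x`: it starts in `I`, follows transitions of `Δ`,
and visits the final set `Fst` infinitely often. -/
def IsAcceptingRun {Q A : Type*} (Δ : Q → A → Q → Prop) (I Fst : Set Q)
    (x : ℕ → A) (s : ℕ → Q) : Prop :=
  s 0 ∈ I ∧ (∀ i, Δ (s i) (x i) (s (i + 1))) ∧ ∀ m, ∃ k, m ≤ k ∧ s k ∈ Fst

/-!
Along any ultrafilter `𝒰 ≤ atTop` all factor frequencies of the run converge (they lie in
`[0, 1]`), and their limits `F` are the marginals of a shift-invariant probability measure on runs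
whose labels are uniformly distributed, by normality. It suffices to show that such an `F` is the
Markov measure with initial law `π q α q` and kernel `P(r →a q) = α q / (α r #A)`; then every
ultrafilter limit is the claimed value, so the frequency converges.

Let `D k = stepKL k ≥ 0` be the relative entropy of the next transition given a factor of length `k`, with
respect to `P`. By the log-sum inequality `D` is nondecreasing, and by shift invariance
`∑_{i<k} D i = H 0 - H k + k log #A ≤ H 0`, since the entropy `H k` of the length-`k` marginal
is at least that of the uniform label marginal, `k log #A`. So `D` vanishes, which is exactly the Markov
property for `P`. Finally the law of the first state divided by `α` is a left fixed vector of the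
irreducible matrix `M`, hence a multiple of `π` by Perron–Frobenius.
-/

namespace RunFrequency

open Finset Topology

section Gibbs

open Real InformationTheory

lemma mul_log_div_add_sub_eq_mul_klFun {a b : ℝ} (hab : b = 0 → a = 0) :
    a * log (a / b) + b - a = b * klFun (a / b) := by
  rcases eq_or_ne b 0 with rfl | hb
  · simp [hab rfl]
  · rw [klFun_apply]
    field_simp

variable {ι : Type*} {S : Finset ι} {a b : ι → ℝ}

lemma sum_mul_log_div_eq_sum_mul_klFun (hab : ∀ i ∈ S, b i = 0 → a i = 0)
    (hsum : ∑ i ∈ S, a i = ∑ i ∈ S, b i) :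
    ∑ i ∈ S, a i * log (a i / b i) = ∑ i ∈ S, b i * klFun (a i / b i) := by
  rw [← sum_congr rfl fun i hi => mul_log_div_add_sub_eq_mul_klFun (hab i hi),
    sum_sub_distrib, sum_add_distrib, hsum, add_sub_cancel_right]

lemma sum_mul_log_div_nonneg (ha : ∀ i ∈ S, 0 ≤ a i) (hb : ∀ i ∈ S, 0 ≤ b i)
    (hab : ∀ i ∈ S, b i = 0 → a i = 0) (hsum : ∑ i ∈ S, a i = ∑ i ∈ S, b i) :
    0 ≤ ∑ i ∈ S, a i * log (a i / b i) := by
  rw [sum_mul_log_div_eq_sum_mul_klFun hab hsum]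
  exact sum_nonneg fun i hi =>
    mul_nonneg (hb i hi) (klFun_nonneg (div_nonneg (ha i hi) (hb i hi)))

lemma eq_of_sum_mul_log_div_eq_zero (ha : ∀ i ∈ S, 0 ≤ a i) (hb : ∀ i ∈ S, 0 ≤ b i)
    (hab : ∀ i ∈ S, b i = 0 → a i = 0) (hsum : ∑ i ∈ S, a i = ∑ i ∈ S, b i)
    (h : ∑ i ∈ S, a i * log (a i / b i) = 0) : ∀ i ∈ S, a i = b i := by
  have hnonneg i (hi : i ∈ S) : 0 ≤ b i * klFun (a i / b i) :=
    mul_nonneg (hb i hi) (klFun_nonneg (div_nonneg (ha i hi) (hb i hi)))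
  rw [sum_mul_log_div_eq_sum_mul_klFun hab hsum, sum_eq_zero_iff_of_nonneg hnonneg] at h
  intro i hi
  rcases mul_eq_zero.mp (h i hi) with hbi | hkl
  · rw [hbi, hab i hi hbi]
  · exact eq_of_div_eq_one ((klFun_eq_zero_iff (div_nonneg (ha i hi) (hb i hi))).mp hkl)

lemma sum_mul_log_div_sum_le (ha : ∀ i ∈ S, 0 ≤ a i) (hb : ∀ i ∈ S, 0 ≤ b i)
    (hab : ∀ i ∈ S, b i = 0 → a i = 0) :
    (∑ i ∈ S, a i) * log ((∑ i ∈ S, a i) / ∑ i ∈ S, b i) ≤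
      ∑ i ∈ S, a i * log (a i / b i) := by
  set c := (∑ i ∈ S, a i) / ∑ i ∈ S, b i
  rcases (sum_nonneg ha).eq_or_lt with hA | hA
  · rw [← hA, zero_mul]
    rw [eq_comm, sum_eq_zero_iff_of_nonneg ha] at hA
    exact (sum_eq_zero fun i hi => by rw [hA i hi, zero_mul]).ge
  have hB : 0 < ∑ i ∈ S, b i := (sum_nonneg hb).lt_of_ne fun hB => hA.ne' <|
    sum_eq_zero fun i hi => hab i hi ((sum_eq_zero_iff_of_nonneg hb).mp hB.symm i hi)
  have hc : 0 < c := div_pos hA hB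
  -- Gibbs' inequality against `c • b`, which has the same total mass as `a`.
  have hgibbs := sum_mul_log_div_nonneg (b := fun i => c * b i) ha
    (fun i hi => mul_nonneg hc.le (hb i hi))
    (fun i hi h => hab i hi ((mul_eq_zero.mp h).resolve_left hc.ne'))
    (by rw [← mul_sum, div_mul_cancel₀ _ hB.ne'])
  have hsplit i (hi : i ∈ S) :
      a i * log (a i / (c * b i)) = a i * log (a i / b i) - a i * log c := by
    rcases (ha i hi).eq_or_lt with h0 | hpos
    · simp [← h0]
    have hbi : b i ≠ 0 := fun h => hpos.ne' (hab i hi h)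
    rw [mul_comm c, ← div_div, log_div (div_ne_zero hpos.ne' hbi) hc.ne', mul_sub]
  rw [sum_congr rfl hsplit, sum_sub_distrib, ← sum_mul] at hgibbs
  linarith

end Gibbs

section Perron

variable {Q : Type*} [Fintype Q] [DecidableEq Q] {M : Matrix Q Q ℝ}

lemma pow_apply_nonneg (hM : ∀ p q, 0 ≤ M p q) (n : ℕ) (p q : Q) : 0 ≤ (M ^ n) p q := by
  induction n generalizing q with
  | zero => rw [pow_zero, one_apply]; split_ifs <;> norm_num
  | succ n ih => exact pow_succ M n ▸ sum_nonneg fun r _ => mul_nonneg (ih r) (hM r q)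

lemma prod_le_pow_apply (hM : ∀ p q, 0 ≤ M p q) :
    ∀ {n : ℕ} (s : Fin (n + 1) → Q),
      ∏ i : Fin n, M (s i.castSucc) (s i.succ) ≤ (M ^ n) (s 0) (s (Fin.last n))
  | 0, s => by simp
  | n + 1, s => by
    have ih := prod_le_pow_apply hM (Fin.init s)
    simp only [Fin.init, Fin.castSucc_zero, ← Fin.succ_castSucc] at ih
    rw [Fin.prod_univ_castSucc, pow_succ, mul_apply, Fin.succ_last]
    exact (mul_le_mul_of_nonneg_right ih (hM _ _)).trans <|
      single_le_sum (f := fun r => (M ^ n) (s 0) r * M r (s (Fin.last (n + 1))))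
        (fun r _ => mul_nonneg (pow_apply_nonneg hM n _ r) (hM r _)) (mem_univ _)

lemma vecMul_pow_eq_self {v : Q → ℝ} (hv : v ᵥ* M = v) (n : ℕ) : v ᵥ* M ^ n = v := by
  induction n with
  | zero => simp
  | succ n ih => rw [pow_succ, ← vecMul_vecMul, ih, hv]

lemma eq_smul_of_vecMul_eq_self [Nonempty Q] (hM : ∀ p q, 0 ≤ M p q)
    (hirr : ∀ p q, ∃ n, 0 < (M ^ n) p q) {π β : Q → ℝ} (hπ : ∀ q, 0 < π q)
    (hπM : π ᵥ* M = π) (hβM : β ᵥ* M = β) : ∃ c : ℝ, β = c • π := by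
  obtain ⟨p₀, hp₀⟩ := Finite.exists_min fun p => β p / π p
  set c := β p₀ / π p₀
  set v := β - c • π
  have hv_nonneg p : 0 ≤ v p := by
    simp only [v, Pi.sub_apply, Pi.smul_apply, smul_eq_mul, sub_nonneg]
    exact (le_div_iff₀ (hπ p)).mp (hp₀ p)
  have hv_p₀ : v p₀ = 0 := by simp [v, c, div_mul_cancel₀ _ (hπ p₀).ne']
  have hvM : v ᵥ* M = v := by simp only [v, sub_vecMul, smul_vecMul, hπM, hβM]
  refine ⟨c, sub_eq_zero.mp (funext fun p => ?_)⟩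
  obtain ⟨n, hn⟩ := hirr p p₀
  have hsum : ∑ r, v r * (M ^ n) r p₀ = 0 := by
    rw [← hv_p₀, ← congrFun (vecMul_pow_eq_self hvM n) p₀]
    rfl
  have := (sum_eq_zero_iff_of_nonneg fun r _ =>
    mul_nonneg (hv_nonneg r) (pow_apply_nonneg hM n r p₀)).mp hsum p (mem_univ p)
  exact (mul_eq_zero.mp this).resolve_right hn.ne'

end Perron

abbrev Factor (Q A : Type*) (k : ℕ) : Type _ := (Fin (k + 1) → Q) × (Fin k → A)

namespace Factor

variable {Q A : Type*} {k : ℕ}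

def first (δ : Factor Q A k) : Q := δ.1 0

def last (δ : Factor Q A k) : Q := δ.1 (Fin.last k)

def IsRun (Δ : Q → A → Q → Prop) (δ : Factor Q A k) : Prop :=
  ∀ j : Fin k, Δ (δ.1 j.castSucc) (δ.2 j) (δ.1 j.succ)

def snoc (δ : Factor Q A k) (z : A × Q) : Factor Q A (k + 1) :=
  (Fin.snoc δ.1 z.2, Fin.snoc δ.2 z.1)

def cons (z : Q × A) (δ : Factor Q A k) : Factor Q A (k + 1) :=
  (Fin.cons z.1 δ.1, Fin.cons z.2 δ.2)

def ofState (q : Q) : Factor Q A 0 := (fun _ => q, Fin.elim0)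

@[simp] lemma first_snoc (δ : Factor Q A k) (z : A × Q) : (δ.snoc z).first = δ.first := by
  simp only [snoc, first]
  exact Fin.snoc_castSucc (i := 0) ..

@[simp] lemma last_snoc (δ : Factor Q A k) (z : A × Q) : (δ.snoc z).last = z.2 := by
  simp [snoc, last]

@[simp] lemma last_cons (z : Q × A) (δ : Factor Q A k) : (cons z δ).last = δ.last := by
  simp [cons, last, ← Fin.succ_last]

@[simp] lemma first_ofState (q : Q) : (ofState q : Factor Q A 0).first = q := rfl

@[simp] lemma last_ofState (q : Q) : (ofState q : Factor Q A 0).last = q := rfl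

lemma cons_snoc (z' : Q × A) (δ : Factor Q A k) (z : A × Q) :
    cons z' (δ.snoc z) = (cons z' δ).snoc z := by
  simp [cons, snoc, Fin.cons_snoc_eq_snoc_cons]

lemma ofState_snoc (p : Q) (a : A) (q : Q) :
    (ofState p : Factor Q A 0).snoc (a, q) = cons (p, a) (ofState q) := by
  ext i
  · fin_cases i <;> rfl
  · fin_cases i; rfl

lemma isRun_snoc_iff {Δ : Q → A → Q → Prop} {δ : Factor Q A k} {z : A × Q} :
    (δ.snoc z).IsRun Δ ↔ δ.IsRun Δ ∧ Δ δ.last z.1 z.2 := by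
  simp only [IsRun, Fin.forall_fin_succ', snoc, last, Fin.succ_castSucc, Fin.succ_last,
    Fin.snoc_castSucc, Fin.snoc_last]

variable (Q A k) in
def snocEquiv : Factor Q A k × (A × Q) ≃ Factor Q A (k + 1) where
  toFun p := p.1.snoc p.2
  invFun δ := ((Fin.init δ.1, Fin.init δ.2), (δ.2 (Fin.last k), δ.1 (Fin.last (k + 1))))
  left_inv _ := by simp [snoc]
  right_inv _ := by simp [snoc]

variable (Q A k) in
def consEquiv : (Q × A) × Factor Q A k ≃ Factor Q A (k + 1) where
  toFun p := cons p.1 p.2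
  invFun δ := ((δ.1 0, δ.2 0), (Fin.tail δ.1, Fin.tail δ.2))
  left_inv _ := by simp [cons]
  right_inv _ := by simp [cons]

variable (Q A) in
def ofStateEquiv : Q ≃ Factor Q A 0 where
  toFun := ofState
  invFun δ := δ.first
  left_inv _ := rfl
  right_inv δ := by
    ext i
    · simp [ofState, first, Fin.fin_one_eq_zero i]
    · exact i.elim0

lemma exists_eq_snoc (δ' : Factor Q A (k + 1)) :
    ∃ (δ : Factor Q A k) (z : A × Q), δ' = δ.snoc z :=
  ⟨_, _, ((snocEquiv Q A k).right_inv δ').symm⟩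

lemma exists_eq_ofState (δ : Factor Q A 0) : ∃ q, δ = ofState q :=
  ⟨_, ((ofStateEquiv Q A).right_inv δ).symm⟩

variable [Fintype Q] [Fintype A]

lemma sum_univ_snoc {M : Type*} [AddCommMonoid M] (f : Factor Q A (k + 1) → M) :
    ∑ δ', f δ' = ∑ δ : Factor Q A k, ∑ z, f (δ.snoc z) := by
  rw [← (snocEquiv Q A k).sum_comp, Fintype.sum_prod_type]
  rfl

lemma sum_univ_cons {M : Type*} [AddCommMonoid M] (f : Factor Q A (k + 1) → M) :
    ∑ δ', f δ' = ∑ δ : Factor Q A k, ∑ z, f (cons z δ) := by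
  rw [← (consEquiv Q A k).sum_comp, Fintype.sum_prod_type_right]
  rfl

end Factor

open Factor

section Kernel

variable {Q A : Type*} [Fintype A] (Δ : Q → A → Q → Prop) [∀ p a q, Decidable (Δ p a q)]

noncomputable def adjMatrix : Matrix Q Q ℝ :=
  Matrix.of fun p q => ((univ.filter fun a : A => Δ p a q).card : ℝ) / Fintype.card A

noncomputable def transWeight (α : Q → ℝ) (r : Q) (z : A × Q) : ℝ :=
  if Δ r z.1 z.2 then α z.2 / (α r * Fintype.card A) else 0

variable {Δ} {α : Q → ℝ}

lemma adjMatrix_nonneg (p q : Q) : 0 ≤ adjMatrix Δ p q := by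
  simp only [adjMatrix, Matrix.of_apply]
  positivity

lemma pow_adjMatrix_apply_pos [Fintype Q] [DecidableEq Q] {n : ℕ} {w : Fin n → A} {p q : Q}
    {s : Fin (n + 1) → Q} (hrun : IsRun Δ w p q s) : 0 < (adjMatrix Δ ^ n) p q := by
  obtain ⟨rfl, rfl, hstep⟩ := hrun
  refine (prod_pos fun i _ => ?_).trans_le (prod_le_pow_apply adjMatrix_nonneg s)
  have : Nonempty A := ⟨w i⟩
  simp only [adjMatrix, Matrix.of_apply]
  exact div_pos (Nat.cast_pos.mpr (card_pos.mpr ⟨w i, by simpa using hstep i⟩)) (by positivity)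

lemma transWeight_nonneg [Nonempty A] (hα : ∀ q, 0 < α q) (r : Q) (z : A × Q) :
    0 ≤ transWeight Δ α r z := by
  have := hα z.2
  have := hα r
  unfold transWeight
  split_ifs <;> positivity

lemma sum_transWeight_prodMk (r q : Q) :
    ∑ a, transWeight Δ α r (a, q) = adjMatrix Δ r q * α q / α r := by
  simp only [transWeight, adjMatrix, Matrix.of_apply, sum_ite, sum_const_zero, add_zero,
    sum_const, nsmul_eq_mul]
  ring

lemma sum_transWeight [Fintype Q] (hα : ∀ q, 0 < α q) (hMα : adjMatrix Δ *ᵥ α = α)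
    (r : Q) : ∑ z, transWeight Δ α r z = 1 := by
  rw [Fintype.sum_prod_type_right]
  simp_rw [sum_transWeight_prodMk, ← sum_div, div_eq_one_iff_eq (hα r).ne']
  exact congrFun hMα r

end Kernel

variable {Q A : Type*} [Fintype Q] [Fintype A]

/-- The finite-dimensional marginals of a shift-invariant probability measure on runs of `Δ`
whose labels are distributed like a uniform Bernoulli sequence. -/
structure IsNormalRunMeasure (Δ : Q → A → Q → Prop) (F : ∀ k, Factor Q A k → ℝ) : Prop where
  nonneg : ∀ k δ, 0 ≤ F k δ
  eq_zero_of_not_isRun : ∀ {k} {δ : Factor Q A k}, ¬ δ.IsRun Δ → F k δ = 0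
  sum_snoc : ∀ k (δ : Factor Q A k), ∑ z, F (k + 1) (δ.snoc z) = F k δ
  sum_cons : ∀ k (δ : Factor Q A k), ∑ z, F (k + 1) (cons z δ) = F k δ
  sum_label : ∀ k (w : Fin k → A), ∑ g, F k (g, w) = 1 / (Fintype.card A : ℝ) ^ k

variable {Δ : Q → A → Q → Prop} {α : Q → ℝ} {F : ∀ k, Factor Q A k → ℝ} {k : ℕ}

namespace IsNormalRunMeasure

lemma apply_snoc_le (hF : IsNormalRunMeasure Δ F) (δ : Factor Q A k) (z : A × Q) :
    F (k + 1) (δ.snoc z) ≤ F k δ :=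
  hF.sum_snoc k δ ▸ single_le_sum (fun _ _ => hF.nonneg _ _) (mem_univ z)

lemma apply_le (hF : IsNormalRunMeasure Δ F) (δ : Factor Q A k) :
    F k δ ≤ 1 / (Fintype.card A : ℝ) ^ k :=
  hF.sum_label k δ.2 ▸ single_le_sum (f := fun g => F k (g, δ.2))
    (fun _ _ => hF.nonneg _ _) (mem_univ δ.1)

lemma sum_eq_one [Nonempty A] (hF : IsNormalRunMeasure Δ F) (k : ℕ) : ∑ δ, F k δ = 1 := by
  rw [Fintype.sum_prod_type_right]
  simp only [hF.sum_label, sum_const, card_univ, Fintype.card_fun, Fintype.card_fin,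
    nsmul_eq_mul, Nat.cast_pow]
  exact mul_one_div_cancel (by positivity)

lemma sum_apply_ofState [Nonempty A] (hF : IsNormalRunMeasure Δ F) :
    ∑ q, F 0 (ofState q) = 1 :=
  ((ofStateEquiv Q A).sum_comp (F 0)).trans (hF.sum_eq_one 0)

lemma sum_mul_last_succ (hF : IsNormalRunMeasure Δ F) (f : Q → ℝ) :
    ∑ δ, F (k + 1) δ * f δ.last = ∑ δ, F k δ * f δ.last := by
  simp_rw [sum_univ_cons (fun δ => F (k + 1) δ * f δ.last), last_cons, ← sum_mul, hF.sum_cons]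

lemma apply_snoc_eq_zero [Nonempty A] [∀ p a q, Decidable (Δ p a q)]
    (hF : IsNormalRunMeasure Δ F) (hα : ∀ q, 0 < α q) {δ : Factor Q A k} {z : A × Q}
    (h : F k δ * transWeight Δ α δ.last z = 0) : F (k + 1) (δ.snoc z) = 0 := by
  rcases mul_eq_zero.mp h with hδ | hP
  · exact le_antisymm (hδ ▸ hF.apply_snoc_le δ z) (hF.nonneg _ _)
  · refine hF.eq_zero_of_not_isRun fun hrun => ?_
    have := hα z.2
    have := hα δ.last
    simp only [transWeight, if_pos (isRun_snoc_iff.mp hrun).2] at hP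
    exact absurd hP (by positivity)

end IsNormalRunMeasure

section Entropy

open Real

noncomputable def entropy (F : ∀ k, Factor Q A k → ℝ) (k : ℕ) : ℝ :=
  -∑ δ, F k δ * log (F k δ)

lemma IsNormalRunMeasure.natCast_mul_log_card_le_entropy [Nonempty A]
    (hF : IsNormalRunMeasure Δ F) (k : ℕ) : k * log (Fintype.card A) ≤ entropy F k := by
  have hterm δ : F k δ * log (F k δ) ≤ F k δ * -(k * log (Fintype.card A)) := by
    rcases (hF.nonneg k δ).eq_or_lt with h0 | hpos
    · simp [← h0]
    refine mul_le_mul_of_nonneg_left ?_ hpos.le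
    rw [← log_pow, ← log_inv, ← one_div]
    exact log_le_log hpos (hF.apply_le δ)
  calc (k : ℝ) * log (Fintype.card A) = -∑ δ, F k δ * -(k * log (Fintype.card A)) := by
        rw [← sum_mul, hF.sum_eq_one]
        ring
    _ ≤ entropy F k := neg_le_neg (sum_le_sum fun δ _ => hterm δ)

variable [∀ p a q, Decidable (Δ p a q)]

variable (Δ α F) in
noncomputable def condKL (k : ℕ) (δ : Factor Q A k) : ℝ :=
  ∑ z, F (k + 1) (δ.snoc z) *
    log (F (k + 1) (δ.snoc z) / (F k δ * transWeight Δ α δ.last z))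

variable (Δ α F) in
noncomputable def stepKL (k : ℕ) : ℝ :=
  ∑ δ, condKL Δ α F k δ

namespace IsNormalRunMeasure

variable [Nonempty A]

lemma condKL_nonneg (hF : IsNormalRunMeasure Δ F) (hα : ∀ q, 0 < α q)
    (hP : ∀ r, ∑ z, transWeight Δ α r z = 1) (δ : Factor Q A k) :
    0 ≤ condKL Δ α F k δ :=
  sum_mul_log_div_nonneg (fun _ _ => hF.nonneg _ _)
    (fun _ _ => mul_nonneg (hF.nonneg _ _) (transWeight_nonneg hα _ _))
    (fun _ _ => hF.apply_snoc_eq_zero hα) (by rw [hF.sum_snoc, ← mul_sum, hP, mul_one])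

lemma stepKL_le_succ (hF : IsNormalRunMeasure Δ F) (hα : ∀ q, 0 < α q) (k : ℕ) :
    stepKL Δ α F k ≤ stepKL Δ α F (k + 1) := by
  rw [stepKL, stepKL, sum_univ_cons]
  refine sum_le_sum fun δ _ => ?_
  simp only [condKL]
  rw [sum_comm]
  refine sum_le_sum fun z _ => ?_
  -- the log-sum inequality over the prepended transition `z'`
  have h := sum_mul_log_div_sum_le (S := univ)
    (a := fun z' => F (k + 2) (cons z' (δ.snoc z)))
    (b := fun z' => F (k + 1) (cons z' δ) * transWeight Δ α δ.last z)
    (fun _ _ => hF.nonneg _ _)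
    (fun _ _ => mul_nonneg (hF.nonneg _ _) (transWeight_nonneg hα _ _))
    (fun _ _ hb => by rw [cons_snoc]; exact hF.apply_snoc_eq_zero hα (by rwa [last_cons]))
  simp only [hF.sum_cons, ← sum_mul] at h
  simpa only [cons_snoc, last_cons] using h

lemma mul_log_div_mul_transWeight (hF : IsNormalRunMeasure Δ F) (hα : ∀ q, 0 < α q)
    (δ : Factor Q A k) (z : A × Q) :
    F (k + 1) (δ.snoc z) * log (F (k + 1) (δ.snoc z) / (F k δ * transWeight Δ α δ.last z)) =
      F (k + 1) (δ.snoc z) * (log (F (k + 1) (δ.snoc z)) - log (F k δ) - log (α z.2)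
        + log (α δ.last) + log (Fintype.card A)) := by
  rcases (hF.nonneg (k + 1) (δ.snoc z)).eq_or_lt with h0 | hpos
  · simp [← h0]
  have hδ : 0 < F k δ := hpos.trans_le (hF.apply_snoc_le δ z)
  have hrun : (δ.snoc z).IsRun Δ := by
    by_contra h
    exact hpos.ne' (hF.eq_zero_of_not_isRun h)
  have := hα z.2
  have := hα δ.last
  rw [transWeight, if_pos (isRun_snoc_iff.mp hrun).2, log_div hpos.ne' (by positivity),
    log_mul hδ.ne' (by positivity), log_div (by positivity) (by positivity),
    log_mul (by positivity) (by positivity)]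
  ring

lemma stepKL_eq (hF : IsNormalRunMeasure Δ F) (hα : ∀ q, 0 < α q) (k : ℕ) :
    stepKL Δ α F k = entropy F k - entropy F (k + 1) + log (Fintype.card A) := by
  -- by shift invariance, the mean of `log α` at the last state does not depend on the length
  have hlast := hF.sum_mul_last_succ (k := k) fun q => log (α q)
  rw [sum_univ_snoc] at hlast
  simp only [last_snoc] at hlast
  simp only [stepKL, condKL, entropy, hF.mul_log_div_mul_transWeight hα, mul_add, mul_sub,
    sum_add_distrib, sum_sub_distrib, hlast]
  rw [sum_univ_snoc (fun δ => F (k + 1) δ * log (F (k + 1) δ))]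
  simp_rw [← sum_mul, hF.sum_snoc]
  rw [hF.sum_eq_one]
  ring

lemma stepKL_eq_zero (hF : IsNormalRunMeasure Δ F) (hα : ∀ q, 0 < α q)
    (hP : ∀ r, ∑ z, transWeight Δ α r z = 1) (k : ℕ) : stepKL Δ α F k = 0 := by
  have hnonneg n : 0 ≤ stepKL Δ α F n := sum_nonneg fun δ _ => hF.condKL_nonneg hα hP δ
  have hbdd n : ∑ i ∈ range n, stepKL Δ α F i ≤ entropy F 0 := by
    simp only [hF.stepKL_eq hα, sum_add_distrib, sum_range_sub', sum_const, card_range,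
      nsmul_eq_mul]
    linarith [hF.natCast_mul_log_card_le_entropy n]
  exact le_antisymm ((monotone_nat_of_le_succ (hF.stepKL_le_succ hα)).ge_of_tendsto
    (summable_of_sum_range_le hnonneg hbdd).tendsto_atTop_zero k) (hnonneg k)

lemma apply_snoc (hF : IsNormalRunMeasure Δ F) (hα : ∀ q, 0 < α q)
    (hP : ∀ r, ∑ z, transWeight Δ α r z = 1) (δ : Factor Q A k) (z : A × Q) :
    F (k + 1) (δ.snoc z) = F k δ * transWeight Δ α δ.last z := by
  have hδ : condKL Δ α F k δ = 0 := (sum_eq_zero_iff_of_nonneg fun δ _ =>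
    hF.condKL_nonneg hα hP δ).mp (hF.stepKL_eq_zero hα hP k) δ (mem_univ δ)
  exact eq_of_sum_mul_log_div_eq_zero (fun _ _ => hF.nonneg _ _)
    (fun _ _ => mul_nonneg (hF.nonneg _ _) (transWeight_nonneg hα _ _))
    (fun _ _ => hF.apply_snoc_eq_zero hα) (by rw [hF.sum_snoc, ← mul_sum, hP, mul_one])
    hδ z (mem_univ z)

end IsNormalRunMeasure

end Entropy

namespace IsNormalRunMeasure

variable [∀ p a q, Decidable (Δ p a q)] [Nonempty A]

lemma apply_eq_of_isRun (hF : IsNormalRunMeasure Δ F) (hα : ∀ q, 0 < α q)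
    (hP : ∀ r, ∑ z, transWeight Δ α r z = 1) : ∀ {k} (δ : Factor Q A k), δ.IsRun Δ →
      F k δ = F 0 (ofState δ.first) * α δ.last / (α δ.first * (Fintype.card A : ℝ) ^ k)
  | 0, δ, _ => by
    obtain ⟨q, rfl⟩ := exists_eq_ofState δ
    rw [first_ofState, last_ofState, pow_zero, mul_one, mul_div_cancel_right₀ _ (hα q).ne']
  | k + 1, δ', hrun => by
    obtain ⟨δ, z, rfl⟩ := exists_eq_snoc δ'
    obtain ⟨hδ, hΔ⟩ := isRun_snoc_iff.mp hrun
    have := hα δ.last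
    rw [hF.apply_snoc hα hP, apply_eq_of_isRun hF hα hP δ hδ, transWeight, if_pos hΔ,
      first_snoc, last_snoc, pow_succ]
    field_simp

lemma vecMul_adjMatrix [DecidableEq Q] (hF : IsNormalRunMeasure Δ F) (hα : ∀ q, 0 < α q)
    (hP : ∀ r, ∑ z, transWeight Δ α r z = 1) :
    (fun q => F 0 (ofState q) / α q) ᵥ* adjMatrix Δ = fun q => F 0 (ofState q) / α q := by
  funext q
  have h : F 0 (ofState q) = ∑ p, F 0 (ofState p) * (adjMatrix Δ p q * α q / α p) := by
    rw [← hF.sum_cons 0 (ofState q), Fintype.sum_prod_type]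
    refine sum_congr rfl fun p _ => ?_
    rw [← sum_transWeight_prodMk, mul_sum]
    refine sum_congr rfl fun a _ => ?_
    rw [← ofState_snoc, hF.apply_snoc hα hP, last_ofState]
  rw [h, Matrix.vecMul, dotProduct, sum_div]
  refine sum_congr rfl fun p _ => ?_
  have := hα p
  have := hα q
  field_simp

theorem apply_eq [DecidableEq Q] (hirr : ∀ p q, ∃ n, 0 < (adjMatrix Δ ^ n) p q)
    (hF : IsNormalRunMeasure Δ F) (hα : ∀ q, 0 < α q) (hMα : adjMatrix Δ *ᵥ α = α)
    {π : Q → ℝ} (hπ : ∀ q, 0 < π q) (hπM : π ᵥ* adjMatrix Δ = π)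
    (hnorm : ∑ q, π q * α q = 1) (δ : Factor Q A k) (hδ : δ.IsRun Δ) :
    F k δ = π δ.first * α δ.last / (Fintype.card A : ℝ) ^ k := by
  have hP := sum_transWeight hα hMα
  have : Nonempty Q := ⟨δ.first⟩
  obtain ⟨c, hc⟩ := eq_smul_of_vecMul_eq_self adjMatrix_nonneg hirr hπ hπM
    (hF.vecMul_adjMatrix hα hP)
  have hν q : F 0 (ofState q) = c * (π q * α q) := by
    have := congrFun hc q
    rw [Pi.smul_apply, smul_eq_mul, div_eq_iff (hα q).ne'] at this
    rw [this, mul_assoc]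
  have hc₁ : c = 1 := by
    simpa only [hν, ← mul_sum, hnorm, mul_one] using hF.sum_apply_ofState
  have := hα δ.first
  rw [hF.apply_eq_of_isRun hα hP δ hδ, hν, hc₁, one_mul]
  field_simp

end IsNormalRunMeasure

section Counting

variable {Q A : Type*} {k : ℕ}

def OccursAt (s : ℕ → Q) (x : ℕ → A) (δ : Factor Q A k) (i : ℕ) : Prop :=
  (∀ j : Fin (k + 1), s (i + j) = δ.1 j) ∧ ∀ j : Fin k, x (i + j) = δ.2 j

instance [DecidableEq Q] [DecidableEq A] (s : ℕ → Q) (x : ℕ → A) (δ : Factor Q A k) :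
    DecidablePred (OccursAt s x δ) :=
  fun _ => inferInstanceAs (Decidable (_ ∧ _))

variable {s : ℕ → Q} {x : ℕ → A}

lemma occursAt_snoc_iff {δ : Factor Q A k} {z : A × Q} {i : ℕ} :
    OccursAt s x (δ.snoc z) i ↔ OccursAt s x δ i ∧ (x (i + k), s (i + (k + 1))) = z := by
  simp only [OccursAt, snoc, Fin.forall_fin_succ', Fin.snoc_castSucc, Fin.snoc_last,
    Fin.val_castSucc, Fin.val_last, Prod.ext_iff]
  tauto

lemma occursAt_cons_iff {δ : Factor Q A k} {z : Q × A} {i : ℕ} :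
    OccursAt s x (cons z δ) i ↔ (s i, x i) = z ∧ OccursAt s x δ (i + 1) := by
  simp only [OccursAt, Factor.cons, Fin.forall_fin_succ, Fin.cons_zero, Fin.cons_succ,
    Fin.val_zero, Fin.val_succ, add_zero, Prod.ext_iff, ← add_assoc, add_right_comm _ _ 1]
  tauto

lemma isRun_of_occursAt {Δ : Q → A → Q → Prop} (hs : ∀ i, Δ (s i) (x i) (s (i + 1)))
    {δ : Factor Q A k} {i : ℕ} (h : OccursAt s x δ i) : δ.IsRun Δ := by
  intro j
  have h₁ := h.1 j.castSucc
  have h₂ := h.1 j.succ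
  simp only [Fin.val_castSucc, Fin.val_succ, ← add_assoc] at h₁ h₂
  rw [← h₁, ← h₂, ← h.2 j]
  exact hs (i + j)

variable [DecidableEq Q] [DecidableEq A]

lemma count_occursAt_eq_card_filter (g : Fin (k + 1) → Q) (w : Fin k → A) (n : ℕ) :
    Nat.count (OccursAt s x (g, w)) n = ((range n).filter fun i =>
      (∀ j : Fin (k + 1), s (i + j) = g j) ∧ ∀ j : Fin k, x (i + j) = w j).card := by
  rw [Nat.count_eq_card_filter_range]
  rfl

lemma count_occursAt_eq_zero {Δ : Q → A → Q → Prop} (hs : ∀ i, Δ (s i) (x i) (s (i + 1)))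
    {δ : Factor Q A k} (hδ : ¬ δ.IsRun Δ) (n : ℕ) : Nat.count (OccursAt s x δ) n = 0 :=
  Nat.count_of_forall_not fun _ _ h => hδ (isRun_of_occursAt hs h)

variable [Fintype Q]

lemma count_occursAt_eq_sum_snoc [Fintype A] (δ : Factor Q A k) (n : ℕ) :
    Nat.count (OccursAt s x δ) n = ∑ z, Nat.count (OccursAt s x (δ.snoc z)) n := by
  simp only [Nat.count_eq_card_filter_range, occursAt_snoc_iff, ← filter_filter]
  exact card_eq_sum_card_fiberwise fun _ _ => mem_univ _

lemma sum_count_occursAt_cons [Fintype A] (δ : Factor Q A k) (n : ℕ) :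
    ∑ z, Nat.count (OccursAt s x (cons z δ)) n =
      Nat.count (fun i => OccursAt s x δ (i + 1)) n := by
  simp only [Nat.count_eq_card_filter_range, occursAt_cons_iff]
  rw [card_eq_sum_card_fiberwise (f := fun i => (s i, x i)) (t := univ) fun _ _ => mem_univ _]
  simp only [filter_filter, and_comm, eq_comm]

lemma sum_count_occursAt_label (w : Fin k → A) (n : ℕ) :
    ∑ g, Nat.count (OccursAt s x (g, w)) n = occCount x (List.ofFn w) n := by
  rw [occCount, card_eq_sum_card_fiberwise (f := fun i (j : Fin (k + 1)) => s (i + j))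
    (t := univ) fun _ _ => mem_univ _]
  refine sum_congr rfl fun g _ => ?_
  simp only [Nat.count_eq_card_filter_range, filter_filter, OccursAt, funext_iff, Fin.forall_iff,
    List.length_ofFn, List.get_ofFn, Fin.cast_mk, and_comm]

end Counting

lemma abs_count_shift_sub_count_le (p : ℕ → Prop) [DecidablePred p] (n : ℕ) :
    |(Nat.count (fun i => p (i + 1)) n : ℝ) - Nat.count p n| ≤ 1 := by
  have h := (Nat.count_succ' p n).symm.trans (Nat.count_succ p n)
  rw [abs_sub_le_iff, sub_le_iff_le_add, sub_le_iff_le_add]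
  constructor <;> split_ifs at h <;> (norm_cast; omega)

lemma tendsto_count_shift_div_sub_count_div (p : ℕ → Prop) [DecidablePred p] :
    Tendsto (fun n => (Nat.count (fun i => p (i + 1)) n : ℝ) / n - Nat.count p n / n) atTop
      (𝓝 0) :=
  squeeze_zero_norm (fun n => by
    rw [← sub_div, norm_div, Real.norm_natCast, Real.norm_eq_abs]
    exact div_le_div_of_nonneg_right (abs_count_shift_sub_count_le p n) n.cast_nonneg)
    tendsto_one_div_atTop_nhds_zero_nat

lemma _root_.IsNormal.tendsto_occCount_div {A : Type*} [Fintype A] [DecidableEq A] {x : ℕ → A}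
    (hx : IsNormal x) (w : List A) :
    Tendsto (fun n => (occCount x w n : ℝ) / n) atTop
      (𝓝 (1 / (Fintype.card A : ℝ) ^ w.length)) := by
  rcases eq_or_ne w [] with rfl | hw
  · have h n : occCount x [] n = n := by simp [occCount]
    simp only [h, List.length_nil, pow_zero, div_one]
    exact tendsto_const_nhds.congr' ((eventually_ne_atTop 0).mono fun n hn =>
      (div_self (Nat.cast_ne_zero.mpr hn)).symm)
  · exact hx w hw

section Frequency

variable {Q A : Type*} [DecidableEq Q] [DecidableEq A] {k : ℕ}

noncomputable def freq (𝒰 : Filter ℕ) (s : ℕ → Q) (x : ℕ → A) (k : ℕ) (δ : Factor Q A k) : ℝ :=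
  limUnder 𝒰 fun n => (Nat.count (OccursAt s x δ) n : ℝ) / n

variable {s : ℕ → Q} {x : ℕ → A} (𝒰 : Ultrafilter ℕ)

lemma tendsto_freq (δ : Factor Q A k) :
    Tendsto (fun n => (Nat.count (OccursAt s x δ) n : ℝ) / n) 𝒰 (𝓝 (freq 𝒰 s x k δ)) := by
  refine tendsto_nhds_limUnder ?_
  have hmem n : (Nat.count (OccursAt s x δ) n : ℝ) / n ∈ Set.Icc (0 : ℝ) 1 :=
    ⟨by positivity, div_le_one_of_le₀ (by exact_mod_cast Nat.count_le _) n.cast_nonneg⟩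
  obtain ⟨c, -, hc⟩ := isCompact_Icc.ultrafilter_le_nhds (𝒰.map _)
    (le_principal_iff.mpr (mem_map.mpr (univ_mem' hmem)))
  exact ⟨c, hc⟩

lemma freq_eq_of_tendsto {δ : Factor Q A k} {c : ℝ}
    (h : Tendsto (fun n => (Nat.count (OccursAt s x δ) n : ℝ) / n) 𝒰 (𝓝 c)) :
    freq 𝒰 s x k δ = c :=
  tendsto_nhds_unique (tendsto_freq 𝒰 δ) h

theorem isNormalRunMeasure_freq [Fintype Q] [Fintype A] {Δ : Q → A → Q → Prop}
    (hs : ∀ i, Δ (s i) (x i) (s (i + 1))) (hx : IsNormal x)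
    (h𝒰 : (𝒰 : Filter ℕ) ≤ atTop) : IsNormalRunMeasure Δ (freq (𝒰 : Filter ℕ) s x) where
  nonneg _ δ := ge_of_tendsto' (tendsto_freq 𝒰 δ) fun _ => by positivity
  eq_zero_of_not_isRun hδ := freq_eq_of_tendsto 𝒰 (by
    simpa only [count_occursAt_eq_zero hs hδ, Nat.cast_zero, zero_div] using tendsto_const_nhds)
  sum_snoc _ δ := (freq_eq_of_tendsto 𝒰 (by
    simpa only [count_occursAt_eq_sum_snoc δ, Nat.cast_sum, sum_div]
      using tendsto_finsetSum univ fun z _ => tendsto_freq 𝒰 (δ.snoc z))).symm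
  sum_cons _ δ := by
    have hsum := tendsto_finsetSum univ fun z _ => tendsto_freq (s := s) (x := x) 𝒰 (cons z δ)
    have hdiff := tendsto_count_shift_div_sub_count_div (OccursAt s x δ)
    simp only [← sum_count_occursAt_cons, Nat.cast_sum, sum_div] at hdiff
    exact (freq_eq_of_tendsto 𝒰 (by simpa using hsum.sub (hdiff.mono_left h𝒰))).symm
  sum_label _ w := tendsto_nhds_unique (tendsto_finsetSum univ fun g _ => tendsto_freq 𝒰 (g, w))
    (by simpa only [← sum_div, ← Nat.cast_sum, sum_count_occursAt_label, List.length_ofFn]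
      using (hx.tendsto_occCount_div (List.ofFn w)).mono_left h𝒰)

end Frequency

end RunFrequency

open RunFrequency in
theorem run_frequency_general {Q A : Type*} [Fintype Q] [DecidableEq Q]
    [Fintype A] [DecidableEq A]
    (Δ : Q → A → Q → Prop) [∀ p a q, Decidable (Δ p a q)] (I Fst : Set Q)
    (hsc : ∀ p q : Q, ∃ (n : ℕ) (w : Fin n → A) (s : Fin (n + 1) → Q), IsRun Δ w p q s)
    (M : Matrix Q Q ℝ)
    (hM : ∀ p q, M p q =
      ((Finset.univ.filter (fun a : A => Δ p a q)).card : ℝ) / Fintype.card A)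
    (α π : Q → ℝ) (hαpos : ∀ q, 0 < α q) (hπpos : ∀ q, 0 < π q)
    (hright : M *ᵥ α = α) (hleft : π ᵥ* M = π)
    (hnorm : ∑ q, π q * α q = 1)
    (x : ℕ → A) (s : ℕ → Q) (hrun : IsAcceptingRun Δ I Fst x s) (hx : IsNormal x)
    (m : ℕ) (g : Fin (m + 1) → Q) (b : Fin m → A)
    (hγ : ∀ i : Fin m, Δ (g i.castSucc) (b i) (g i.succ)) :
    Filter.Tendsto
      (fun n => (((Finset.range n).filter
        (fun i => (∀ j : Fin (m + 1), s (i + j) = g j) ∧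
          ∀ j : Fin m, x (i + j) = b j)).card : ℝ) / n)
      Filter.atTop (nhds (π (g 0) * α (g (Fin.last m)) / (Fintype.card A : ℝ) ^ m)) := by
  obtain rfl : M = adjMatrix Δ := Matrix.ext hM
  have : Nonempty A := ⟨x 0⟩
  have hirr p q : ∃ n, 0 < (adjMatrix Δ ^ n) p q :=
    let ⟨n, _, _, hpq⟩ := hsc p q
    ⟨n, pow_adjMatrix_apply_pos hpq⟩
  rw [tendsto_iff_ultrafilter]
  intro 𝒰 h𝒰
  have hF := isNormalRunMeasure_freq 𝒰 hrun.2.1 hx h𝒰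
  simp only [← count_occursAt_eq_card_filter]
  exact hF.apply_eq hirr hαpos hright hπpos hleft hnorm (g, b) hγ ▸ tendsto_freq 𝒰 (g, b)

/-- In a strongly connected unambiguous automaton whose normalized adjacency matrix has
spectral radius 1 with positive eigenvectors `π`, `α` (normalized by `∑ π_q α_q = 1`),
every finite run `γ = q_0 →a1 q_1 ⋯ →am q_m` has limiting frequency
`π_{q_0} α_{q_m} / (#A)^m` as a factor of an accepting run labeled by a normal sequence. -/
theorem run_frequency {Q A : Type*} [Fintype Q] [DecidableEq Q]
    [Fintype A] [DecidableEq A] [Nonempty A]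
    (Δ : Q → A → Q → Prop) [∀ p a q, Decidable (Δ p a q)] (I Fst : Set Q)
    (hsc : ∀ p q : Q, ∃ (n : ℕ) (w : Fin n → A) (s : Fin (n + 1) → Q), IsRun Δ w p q s)
    (hunamb : ∀ (x : ℕ → A) (s s' : ℕ → Q),
      IsAcceptingRun Δ I Fst x s → IsAcceptingRun Δ I Fst x s' → s = s')
    (M : Matrix Q Q ℝ)
    (hM : ∀ p q, M p q =
      ((Finset.univ.filter (fun a : A => Δ p a q)).card : ℝ) / Fintype.card A)
    (hsr : ∀ z ∈ spectrum ℂ (M.map (Complex.ofReal)), ‖z‖ ≤ 1)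
    (α π : Q → ℝ) (hαpos : ∀ q, 0 < α q) (hπpos : ∀ q, 0 < π q)
    (hright : M *ᵥ α = α) (hleft : π ᵥ* M = π)
    (hnorm : ∑ q, π q * α q = 1)
    (x : ℕ → A) (s : ℕ → Q) (hrun : IsAcceptingRun Δ I Fst x s) (hx : IsNormal x)
    (m : ℕ) (g : Fin (m + 1) → Q) (b : Fin m → A)
    (hγ : ∀ i : Fin m, Δ (g i.castSucc) (b i) (g i.succ)) :
    Filter.Tendsto
      (fun n => (((Finset.range n).filter
        (fun i => (∀ j : Fin (m + 1), s (i + j) = g j) ∧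
          ∀ j : Fin m, x (i + j) = b j)).card : ℝ) / n)
      Filter.atTop (nhds (π (g 0) * α (g (Fin.last m)) / (Fintype.card A : ℝ) ^ m)) :=
  run_frequency_general Δ I Fst hsc M hM α π hαpos hπpos hright hleft hnorm x s hrun hx m g b hγ
end

section
/- Let x ∈ A^ℕ be normal, let k ≥ 1, and factor x into consecutive blocks w_1 w_2 w_3 ⋯ of length k. Then for every word w ∈ A^k, the limiting frequency of indices i with w_i = w equals (#A)^{-k}: lim_{n→∞} #{1 ≤ i ≤ n : w_i = w}/n = (#A)^{-k}. -/
open BigOperators Filter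

/-!
Group the aligned `k`-blocks into super-blocks of `t` consecutive blocks. An aligned occurrence
of a super-block is an occurrence of a word of length `t * k`, so normality lets each value of a
super-block occur at most about `2 * k * t` times as often as under the uniform distribution.
Under the uniform distribution the number of copies of `w` in a super-block, minus its mean, is
a sum of `t` independent centred variables with fourth moment `O(t ^ 2)`. By Markov's inequality
for the fourth moment, the super-blocks whose count of `w` is off by `ε * t` are therefore rare
even after the loss of the factor `2 * k * t`, and letting `t → ∞` gives the aligned frequency.
-/

open Finset Filter Topology

section Moments

variable {K : Type*} [Fintype K] (Y : K → ℝ)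

lemma sum_pi_succ_comp_sum (F : ℝ → ℝ) (t : ℕ) :
    ∑ v : Fin (t + 1) → K, F (∑ s, Y (v s)) = ∑ a, ∑ v : Fin t → K, F (Y a + ∑ s, Y (v s)) := by
  rw [← (Fin.consEquiv fun _ => K).sum_comp, Fintype.sum_prod_type]
  simp [Fin.sum_univ_succ]

variable {Y}

lemma sum_pi_sum_comp_eq_zero (h0 : ∑ a, Y a = 0) (t : ℕ) :
    ∑ v : Fin t → K, ∑ s, Y (v s) = 0 := by
  induction t with
  | zero => simp
  | succ t ih =>
    rw [sum_pi_succ_comp_sum Y fun z => z]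
    simp [sum_add_distrib, ← mul_sum, h0, ih]

lemma card_mul_sum_pi_sum_comp_sq (h0 : ∑ a, Y a = 0) (t : ℕ) :
    Fintype.card K * ∑ v : Fin t → K, (∑ s, Y (v s)) ^ 2
      = t * Fintype.card K ^ t * ∑ a, Y a ^ 2 := by
  induction t with
  | zero => simp
  | succ t ih =>
    have expand : ∀ a (v : Fin t → K), (Y a + ∑ s, Y (v s)) ^ 2
        = Y a ^ 2 + 2 * Y a * ∑ s, Y (v s) + (∑ s, Y (v s)) ^ 2 := fun _ _ => by ring
    rw [sum_pi_succ_comp_sum Y (· ^ 2)]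
    simp only [expand, sum_add_distrib, ← mul_sum, sum_const, card_univ, Fintype.card_fun,
      Fintype.card_fin, nsmul_eq_mul, sum_pi_sum_comp_eq_zero h0, mul_zero, add_zero]
    push_cast
    linear_combination (Fintype.card K : ℝ) * ih

lemma sum_pi_sum_comp_pow_four_le [Nonempty K] (h0 : ∑ a, Y a = 0) (hb : ∀ a, |Y a| ≤ 1)
    (h2 : ∑ a, Y a ^ 2 ≤ 1) (t : ℕ) :
    ∑ v : Fin t → K, (∑ s, Y (v s)) ^ 4 ≤ 3 * t ^ 2 * Fintype.card K ^ t := by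
  have hK : (1 : ℝ) ≤ Fintype.card K := by exact_mod_cast Fintype.card_pos
  have h4 : ∑ a, Y a ^ 4 ≤ 1 := by
    refine le_trans (sum_le_sum fun a _ => ?_) h2
    have := (sq_le_one_iff_abs_le_one _).2 (hb a)
    nlinarith [sq_nonneg (Y a)]
  induction t with
  | zero => simp
  | succ t ih =>
    have expand : ∀ a (v : Fin t → K), (Y a + ∑ s, Y (v s)) ^ 4
        = Y a ^ 4 + 4 * Y a ^ 3 * ∑ s, Y (v s) + 6 * Y a ^ 2 * (∑ s, Y (v s)) ^ 2
          + 4 * Y a * (∑ s, Y (v s)) ^ 3 + (∑ s, Y (v s)) ^ 4 := fun _ _ => by ring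
    rw [sum_pi_succ_comp_sum Y (· ^ 4)]
    simp only [expand, sum_add_distrib, ← mul_sum, ← sum_mul, sum_const, card_univ,
      Fintype.card_fun, Fintype.card_fin, nsmul_eq_mul, sum_pi_sum_comp_eq_zero h0, h0, mul_zero,
      zero_mul, add_zero]
    push_cast
    set n : ℝ := (Fintype.card K : ℝ)
    set P2 := ∑ v : Fin t → K, (∑ s, Y (v s)) ^ 2
    have hP2 : n * P2 = t * n ^ t * ∑ a, Y a ^ 2 := card_mul_sum_pi_sum_comp_sq h0 t
    have hP2_nonneg : 0 ≤ P2 := by positivity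
    have hKt : 1 ≤ n ^ t := one_le_pow₀ hK
    have first : n ^ t * ∑ a, Y a ^ 4 ≤ n ^ t * n := by gcongr; linarith
    have middle : (6 * ∑ a, Y a ^ 2) * P2 ≤ 6 * t * n ^ t * n := by
      have hm2P2 : (∑ a, Y a ^ 2) * P2 ≤ n * P2 :=
        (mul_le_of_le_one_left hP2_nonneg h2).trans (le_mul_of_one_le_left hP2_nonneg hK)
      have ht : (t : ℝ) * n ^ t * ∑ a, Y a ^ 2 ≤ t * n ^ t * n := by gcongr; linarith
      linarith
    have last : n * ∑ v : Fin t → K, (∑ s, Y (v s)) ^ 4 ≤ n * (3 * t ^ 2 * n ^ t) := by gcongr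
    rw [pow_succ n t]
    nlinarith [(by positivity : 0 ≤ n ^ t * n)]

end Moments

section AlignedBlocks

variable {B : Type*}

def alignedBlock (y : ℕ → B) (k i : ℕ) : Fin k → B := fun j => y (i * k + j)

lemma alignedBlock_mul (y : ℕ → B) (t k g : ℕ) :
    alignedBlock y (t * k) g = fun i => alignedBlock (alignedBlock y k) t g i.divNat i.modNat := by
  funext i
  simp only [alignedBlock, Fin.coe_divNat, Fin.coe_modNat]
  rw [add_mul, add_assoc, Nat.div_add_mod', mul_assoc]

lemma sum_range_mul_eq_sum_alignedBlock {M : Type*} [AddCommMonoid M] (f : B → M) (y : ℕ → B)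
    (t Γ : ℕ) :
    ∑ i ∈ range (Γ * t), f (y i) = ∑ g ∈ range Γ, ∑ s, f (alignedBlock y t g s) := by
  induction Γ with
  | zero => simp
  | succ Γ ih =>
    rw [Nat.succ_mul, sum_range_add, ih, sum_range_succ,
      ← Fin.sum_univ_eq_sum_range fun s => f (y (Γ * t + s))]
    rfl

lemma card_filter_alignedBlock_eq_le_occCount [DecidableEq B] (y : ℕ → B) {m : ℕ} (hm : 0 < m)
    (v : Fin m → B) (Γ : ℕ) :
    #{g ∈ range Γ | alignedBlock y m g = v} ≤ occCount y (List.ofFn v) (Γ * m) := by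
  refine card_le_card_of_injOn (· * m) (fun g hg => ?_) (fun g _ g' _ h => ?_)
  · obtain ⟨hgΓ, rfl⟩ := mem_filter.1 hg
    refine mem_filter.2
      ⟨mem_range.2 (Nat.mul_lt_mul_of_pos_right (mem_range.1 hgΓ) hm), fun j => ?_⟩
    rw [List.get_ofFn]
    rfl
  · exact Nat.eq_of_mul_eq_mul_right hm h

end AlignedBlocks

lemma IsNormal.eventually_card_filter_alignedBlock_eq_le {A : Type*} [Fintype A] [DecidableEq A]
    {x : ℕ → A} (hx : IsNormal x) {m : ℕ} (hm : 0 < m) (v : Fin m → A) :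
    ∀ᶠ Γ in atTop,
      (#{g ∈ range Γ | alignedBlock x m g = v} : ℝ) ≤ 2 * m * Γ / Fintype.card A ^ m := by
  have hpos : (0 : ℝ) < Fintype.card A ^ m :=
    pow_pos (Nat.cast_pos.2 (Fintype.card_pos_iff.2 ⟨x 0⟩)) m
  have hfreq := hx (List.ofFn v) (by simpa using hm.ne')
  rw [List.length_ofFn] at hfreq
  have hlt : 1 / (Fintype.card A : ℝ) ^ m < 2 / Fintype.card A ^ m := by gcongr; norm_num
  have hlen : Tendsto (· * m) atTop atTop := tendsto_id.atTop_mul_const' hm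
  filter_upwards [hlen.eventually (hfreq.eventually (gt_mem_nhds hlt)), eventually_gt_atTop 0]
    with Γ hΓ hΓpos
  have hN : (0 : ℝ) < (Γ * m : ℕ) := by positivity
  rw [div_lt_iff₀ hN] at hΓ
  calc (#{g ∈ range Γ | alignedBlock x m g = v} : ℝ) ≤ occCount x (List.ofFn v) (Γ * m) := by
        exact_mod_cast card_filter_alignedBlock_eq_le_occCount x hm v Γ
    _ ≤ 2 * m * Γ / Fintype.card A ^ m := by
        rw [div_mul_eq_mul_div, lt_div_iff₀ hpos] at hΓ
        rw [le_div_iff₀ hpos]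
        push_cast at hΓ
        linarith

section CenteredIndicator

variable {K : Type*} [Fintype K] [DecidableEq K]

noncomputable def centeredIndicator (b a : K) : ℝ :=
  (if a = b then 1 else 0) - 1 / Fintype.card K

lemma sum_centeredIndicator (b : K) : ∑ a, centeredIndicator b a = 0 := by
  have : Nonempty K := ⟨b⟩
  have : (Fintype.card K : ℝ) ≠ 0 := Nat.cast_ne_zero.2 Fintype.card_ne_zero
  simp [centeredIndicator, sum_sub_distrib, this]

lemma abs_centeredIndicator_le (b a : K) : |centeredIndicator b a| ≤ 1 := by
  have hK : (1 : ℝ) ≤ Fintype.card K := by exact_mod_cast Fintype.card_pos_iff.2 ⟨b⟩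
  have hq : 1 / (Fintype.card K : ℝ) ≤ 1 := (div_le_one (by positivity)).2 hK
  have hq0 : 0 < 1 / (Fintype.card K : ℝ) := by positivity
  rw [centeredIndicator, abs_le]
  split_ifs <;> constructor <;> linarith

lemma sum_centeredIndicator_sq_le (b : K) : ∑ a, centeredIndicator b a ^ 2 ≤ 1 := by
  have hsq : ∀ a, centeredIndicator b a ^ 2
      = (if a = b then centeredIndicator b a else 0) - centeredIndicator b a / Fintype.card K := by
    intro a; rw [sq]; nth_rewrite 2 [centeredIndicator]; split_ifs <;> ring
  rw [Finset.sum_congr rfl fun a _ => hsq a, sum_sub_distrib, Finset.sum_ite_eq', ← sum_div,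
    sum_centeredIndicator]
  simp [centeredIndicator]

lemma card_filter_range_sub_eq_sum_centeredIndicator (y : ℕ → K) (b : K) (n : ℕ) :
    (#{i ∈ range n | y i = b} : ℝ) - n / Fintype.card K
      = ∑ i ∈ range n, centeredIndicator b (y i) := by
  simp only [centeredIndicator, sum_sub_distrib, sum_boole, sum_const, card_range, nsmul_eq_mul]
  ring

end CenteredIndicator

lemma abs_le_pow_four_div_add (y : ℝ) {c : ℝ} (hc : 0 < c) : |y| ≤ y ^ 4 / c ^ 3 + c := by
  rcases le_or_gt |y| c with hy | hy
  · have : 0 ≤ y ^ 4 / c ^ 3 := by positivity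
    linarith
  · have hc3 : c ^ 3 ≤ |y| ^ 3 := pow_le_pow_left₀ hc.le hy.le 3
    have : |y| * c ^ 3 ≤ y ^ 4 := by
      calc |y| * c ^ 3 ≤ |y| * |y| ^ 3 := by gcongr
        _ = |y| ^ 4 := by ring
        _ = y ^ 4 := by rw [pow_abs, abs_of_nonneg (by positivity)]
    have : |y| ≤ y ^ 4 / c ^ 3 := (le_div_iff₀ (by positivity)).2 this
    linarith

lemma sum_abs_le_of_card_fiber_le {ι K : Type*} [Fintype K] [DecidableEq K] (s : Finset ι)
    (U : ι → K) (F : K → ℝ) {D c : ℝ} (hc : 0 < c)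
    (hU : ∀ u, (#{g ∈ s | U g = u} : ℝ) ≤ D) :
    ∑ g ∈ s, |F (U g)| ≤ D * (∑ u, F u ^ 4) / c ^ 3 + c * #s := by
  have hfibres : ∑ g ∈ s, F (U g) ^ 4 ≤ D * ∑ u, F u ^ 4 := by
    rw [← sum_fiberwise s U, mul_sum]
    refine sum_le_sum fun u _ => ?_
    rw [Finset.sum_congr rfl fun g hg => by rw [(mem_filter.1 hg).2], sum_const, nsmul_eq_mul]
    exact mul_le_mul_of_nonneg_right (hU u) (by positivity)
  calc ∑ g ∈ s, |F (U g)| ≤ ∑ g ∈ s, (F (U g) ^ 4 / c ^ 3 + c) :=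
        sum_le_sum fun g _ => abs_le_pow_four_div_add _ hc
    _ = (∑ g ∈ s, F (U g) ^ 4) / c ^ 3 + c * #s := by
        rw [sum_add_distrib, sum_div, sum_const, nsmul_eq_mul, mul_comm]
    _ ≤ D * (∑ u, F u ^ 4) / c ^ 3 + c * #s := by gcongr

lemma tendsto_count_div_of_eventually_mul {p : ℕ → Prop} [DecidablePred p] {q : ℝ} (hq0 : 0 ≤ q)
    (hq1 : q ≤ 1)
    (h : ∀ ε > 0, ∃ t > 0, ∀ᶠ Γ in atTop, |(Nat.count p (Γ * t) : ℝ) - Γ * t * q| ≤ ε * (Γ * t)) :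
    Tendsto (fun n => (Nat.count p n : ℝ) / n) atTop (𝓝 q) := by
  rw [Metric.tendsto_nhds]
  intro ε hε
  obtain ⟨t, ht, hev⟩ := h (ε / 2) (half_pos hε)
  obtain ⟨n₀, hn₀⟩ := exists_nat_gt (2 * t / ε)
  filter_upwards [(Nat.tendsto_div_const_atTop ht.ne').eventually hev, eventually_gt_atTop n₀]
    with n hΓ hn
  have hsplit : n = n / t * t + n % t := (Nat.div_add_mod' n t).symm
  have hr : n % t < t := Nat.mod_lt n ht
  have hcount := Nat.count_add p (n / t * t) (n % t)
  have hrest := Nat.count_le (fun i => p (n / t * t + i)) (n := n % t)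
  rw [← hsplit] at hcount
  have hn' : 2 * t / ε < n := hn₀.trans (by exact_mod_cast hn)
  rw [div_lt_iff₀ hε] at hn'
  have hnpos : (0 : ℝ) < n := by nlinarith
  rw [Real.dist_eq, div_sub' hnpos.ne', abs_div, abs_of_pos hnpos, div_lt_iff₀ hnpos]
  have hsplitR : (n : ℝ) = (n / t : ℕ) * t + (n % t : ℕ) := by exact_mod_cast hsplit
  have hΓt : ((n / t : ℕ) : ℝ) * t ≤ n := by rw [hsplitR]; simp
  have hrR : ((n % t : ℕ) : ℝ) < t := by exact_mod_cast hr
  have hrestR : (Nat.count (fun i => p (n / t * t + i)) (n % t) : ℝ) ≤ (n % t : ℕ) := by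
    exact_mod_cast hrest
  rw [hcount, Nat.cast_add, abs_lt]
  obtain ⟨hlo, hhi⟩ := abs_le.1 hΓ
  constructor <;> nlinarith

theorem tendsto_card_filter_eq_div_of_card_filter_alignedBlock_le {B : Type*} [Fintype B]
    [DecidableEq B] (y : ℕ → B) (C : ℝ)
    (hy : ∀ t, 0 < t → ∀ u : Fin t → B, ∀ᶠ Γ in atTop,
      (#{g ∈ range Γ | alignedBlock y t g = u} : ℝ) ≤ C * t * Γ / Fintype.card B ^ t)
    (b : B) :
    Tendsto (fun n => (#{i ∈ range n | y i = b} : ℝ) / n) atTop (𝓝 (1 / Fintype.card B)) := by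
  have : Nonempty B := ⟨b⟩
  have hB : (1 : ℝ) ≤ Fintype.card B := by exact_mod_cast Fintype.card_pos
  simp_rw [← Nat.count_eq_card_filter_range]
  refine tendsto_count_div_of_eventually_mul (by positivity) ((div_le_one (by positivity)).2 hB)
    fun ε hε => ?_
  have hδ : 0 < ε / 2 := half_pos hε
  obtain ⟨t, ht, hbig⟩ : ∃ t : ℕ, 0 < t ∧ 3 * C / (ε / 2) ^ 3 ≤ ε / 2 * t := by
    obtain ⟨t, ht⟩ := exists_nat_ge (3 * C / (ε / 2) ^ 4)
    refine ⟨t + 1, t.succ_pos, ?_⟩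
    rw [div_le_iff₀ (by positivity)] at ht
    rw [div_le_iff₀ (by positivity)]
    push_cast
    nlinarith [pow_pos hδ 4]
  refine ⟨t, ht, ?_⟩
  filter_upwards [eventually_all.2 (hy t ht)] with Γ hΓ
  set S : (Fin t → B) → ℝ := fun u => ∑ s, centeredIndicator b (u s)
  have hdev : (Nat.count (fun i => y i = b) (Γ * t) : ℝ) - Γ * t * (1 / Fintype.card B)
      = ∑ g ∈ range Γ, S (alignedBlock y t g) := by
    rw [Nat.count_eq_card_filter_range, mul_one_div, ← Nat.cast_mul,
      card_filter_range_sub_eq_sum_centeredIndicator, sum_range_mul_eq_sum_alignedBlock]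
  have hD : 0 ≤ C * t * Γ / Fintype.card B ^ t := (Nat.cast_nonneg _).trans (hΓ fun _ => b)
  have htpos : (0 : ℝ) < t := Nat.cast_pos.2 ht
  calc |(Nat.count (fun i => y i = b) (Γ * t) : ℝ) - Γ * t * (1 / Fintype.card B)|
      = |∑ g ∈ range Γ, S (alignedBlock y t g)| := by rw [hdev]
    _ ≤ ∑ g ∈ range Γ, |S (alignedBlock y t g)| := abs_sum_le_sum_abs _ _
    _ ≤ C * t * Γ / Fintype.card B ^ t * (∑ u, S u ^ 4) / (ε / 2 * t) ^ 3
          + ε / 2 * t * #(range Γ) :=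
        sum_abs_le_of_card_fiber_le _ _ S (mul_pos hδ htpos) hΓ
    _ ≤ C * t * Γ / Fintype.card B ^ t * (3 * t ^ 2 * Fintype.card B ^ t) / (ε / 2 * t) ^ 3
          + ε / 2 * t * Γ := by
        gcongr
        · exact sum_pi_sum_comp_pow_four_le (sum_centeredIndicator b) (abs_centeredIndicator_le b)
            (sum_centeredIndicator_sq_le b) t
        · simp
    _ = 3 * C / (ε / 2) ^ 3 * Γ + ε / 2 * t * Γ := by field_simp
    _ ≤ ε / 2 * t * Γ + ε / 2 * t * Γ := by gcongr
    _ = ε * (Γ * t) := by ring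

lemma IsNormal.eventually_card_filter_superblock_eq_le {A : Type*} [Fintype A] [DecidableEq A]
    {x : ℕ → A} (hx : IsNormal x) {k t : ℕ} (hk : 0 < k) (ht : 0 < t) (u : Fin t → Fin k → A) :
    ∀ᶠ Γ in atTop, (#{g ∈ range Γ | alignedBlock (alignedBlock x k) t g = u} : ℝ)
      ≤ 2 * k * t * Γ / Fintype.card (Fin k → A) ^ t := by
  filter_upwards [hx.eventually_card_filter_alignedBlock_eq_le (Nat.mul_pos ht hk)
    fun i => u i.divNat i.modNat] with Γ hΓ
  have hsub : {g ∈ range Γ | alignedBlock (alignedBlock x k) t g = u}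
      ⊆ {g ∈ range Γ | alignedBlock x (t * k) g = fun i => u i.divNat i.modNat} := fun g hg => by
    obtain ⟨hgΓ, rfl⟩ := mem_filter.1 hg
    exact mem_filter.2 ⟨hgΓ, alignedBlock_mul x t k g⟩
  calc _ ≤ _ := Nat.cast_le.2 (card_le_card hsub)
    _ ≤ _ := hΓ
    _ = _ := by rw [Fintype.card_fun, Fintype.card_fin, Nat.cast_pow, ← pow_mul]; push_cast; ring

theorem aligned_block_frequency_general {A : Type*} [Fintype A] [DecidableEq A]
    (x : ℕ → A) (hx : IsNormal x) (k : ℕ) (hk : 1 ≤ k) (w : Fin k → A) :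
    Filter.Tendsto
      (fun n => (((Finset.range n).filter
          (fun i => ∀ j : Fin k, x (i * k + j) = w j)).card : ℝ) / n)
      Filter.atTop (nhds (1 / (Fintype.card A : ℝ) ^ k)) := by
  simpa [alignedBlock, funext_iff, Fintype.card_fun] using
    tendsto_card_filter_eq_div_of_card_filter_alignedBlock_le (alignedBlock x k) (2 * k)
      (fun t ht => hx.eventually_card_filter_superblock_eq_le hk ht) w

/-- In a normal sequence, the aligned occurrences of each block of length `k ≥ 1`
(i.e. occurrences at positions that are multiples of `k`) have limiting frequency
`(#A)^{-k}` among the consecutive blocks of length `k`. -/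
theorem aligned_block_frequency {A : Type*} [Fintype A] [DecidableEq A] [Nonempty A]
    (x : ℕ → A) (hx : IsNormal x) (k : ℕ) (hk : 1 ≤ k) (w : Fin k → A) :
    Filter.Tendsto
      (fun n => (((Finset.range n).filter
          (fun i => ∀ j : Fin k, x (i * k + j) = w j)).card : ℝ) / n)
      Filter.atTop (nhds (1 / (Fintype.card A : ℝ) ^ k)) :=
  aligned_block_frequency_general x hx k hk w
end
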